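/- arXiv:2505.14602 — 4 statements merged into one kernel-verified Lean document; each statement's English description precedes it below -/
import Mathlib

section
/- The Lamplighter group is not finitely presented: for every n, the relation [a, x⁻ⁿaxⁿ] = 1 does not lie in the normal closure (in the free group F(a,x)) of the relations {a², [a, x⁻¹ax], …, [a, x⁻⁽ⁿ⁻¹⁾axⁿ⁻¹]}. -/
open scoped commutatorElement

inductive Gen : Type | a | x

def A : FreeGroup Gen := FreeGroup.of Gen.a
def X : FreeGroup Gen := FreeGroup.of Gen.x

def lampRels : Set (FreeGroup Gen) :=
  {w | w = A * A ∨ ∃ k : ℤ, w = ⁅A, X ^ (-k) * A * X ^ k⁆}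

abbrev L := PresentedGroup lampRels

def toL : FreeGroup Gen →* L := QuotientGroup.mk' (Subgroup.normalClosure lampRels)

/-- The witness homomorphism to permutations of ℤ. -/
def phi (n : ℕ) : FreeGroup Gen →* Equiv.Perm ℤ :=
  FreeGroup.lift (fun g => match g with
    | Gen.a => Equiv.swap (0 : ℤ) (n : ℤ)
    | Gen.x => Equiv.addRight (1 : ℤ))

lemma phi_A (n : ℕ) : phi n A = Equiv.swap (0 : ℤ) (n : ℤ) := FreeGroup.lift_apply_of

lemma phi_X (n : ℕ) : phi n X = Equiv.addRight (1 : ℤ) := FreeGroup.lift_apply_of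

lemma phi_conj (n : ℕ) (k : ℤ) :
    phi n (X ^ (-k) * A * X ^ k) = Equiv.swap (-k) ((n : ℤ) - k) := by
  have h : phi n (X ^ (-k) * A * X ^ k)
      = (phi n X) ^ (-k) * phi n A * ((phi n X) ^ (-k))⁻¹ := by
    rw [← zpow_neg, neg_neg]
    simp [map_mul, map_zpow]
  rw [h, phi_A, phi_X, ← Equiv.swap_apply_apply]
  simp [sub_eq_add_neg]

/-- The Lamplighter group is not finitely presented: [a, x⁻ⁿaxⁿ] is not in the normal
closure of {a², [a, x⁻¹ax], …, [a, x⁻⁽ⁿ⁻¹⁾axⁿ⁻¹]} in the free group F(a,x). -/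
theorem not_finitely_presented (n : ℕ) (hn : 1 ≤ n) :
    ⁅A, X ^ (-(n : ℤ)) * A * X ^ (n : ℤ)⁆ ∉
      Subgroup.normalClosure
        {w | w = A * A ∨ ∃ k : ℕ, 1 ≤ k ∧ k < n ∧
          w = ⁅A, X ^ (-(k : ℤ)) * A * X ^ (k : ℤ)⁆} := by
  intro hmem
  -- the relators are all killed by φ
  have hker : {w | w = A * A ∨ ∃ k : ℕ, 1 ≤ k ∧ k < n ∧
      w = ⁅A, X ^ (-(k : ℤ)) * A * X ^ (k : ℤ)⁆} ⊆ ((phi n).ker : Set (FreeGroup Gen)) := by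
    rintro w (rfl | ⟨k, hk1, hkn, rfl⟩)
    · simp only [SetLike.mem_coe, MonoidHom.mem_ker, map_mul, phi_A, Equiv.swap_mul_self]
    · have h1 : phi n ⁅A, X ^ (-(k : ℤ)) * A * X ^ (k : ℤ)⁆
          = ⁅phi n A, phi n (X ^ (-(k : ℤ)) * A * X ^ (k : ℤ))⁆ := map_commutatorElement (phi n) _ _
      rw [SetLike.mem_coe, MonoidHom.mem_ker, h1, phi_A, phi_conj, commutatorElement_eq_one_iff_commute]
      apply Equiv.Perm.Disjoint.commute
      intro z
      by_cases h0 : z = 0 ∨ z = (n : ℤ)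
      · right
        apply Equiv.swap_apply_of_ne_of_ne <;> omega
      · left
        push_neg at h0
        exact Equiv.swap_apply_of_ne_of_ne h0.1 h0.2
  have hle := Subgroup.normalClosure_le_normal hker
  have h1 : phi n ⁅A, X ^ (-(n : ℤ)) * A * X ^ (n : ℤ)⁆ = 1 := hle hmem
  rw [map_commutatorElement, phi_A, phi_conj] at h1
  have h2 : ((n : ℤ) - n) = 0 := by ring
  rw [h2, commutatorElement_eq_one_iff_commute] at h1
  have h3 := congrArg (fun (e : Equiv.Perm ℤ) => e 0) h1
  simp only [Equiv.Perm.mul_apply] at h3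
  rw [show (Equiv.swap (-(n:ℤ)) 0) 0 = -(n:ℤ) from Equiv.swap_apply_right _ _,
    show (Equiv.swap (0:ℤ) (n:ℤ)) 0 = (n:ℤ) from Equiv.swap_apply_left _ _,
    Equiv.swap_apply_of_ne_of_ne (a := (0:ℤ)) (by omega) (by omega),
    Equiv.swap_apply_of_ne_of_ne (a := (-(n:ℤ))) (by omega) (by omega)] at h3
  omega
end

section
/- The map sending x ↦ x and a ↦ x⁻¹axa extends to an injective group homomorphism from the Lamplighter group L to itself which is not surjective. -/
open scoped commutatorElement

namespace LampAux

open Multiplicative SemidirectProduct Finsupp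

noncomputable section

/-! ### Basic elements of `L` -/

def xL : L := toL X
def aL : L := toL A

lemma toL_x : toL X = PresentedGroup.of Gen.x := rfl
lemma toL_a : toL A = PresentedGroup.of Gen.a := rfl

lemma rel_one {w : FreeGroup Gen} (hw : w ∈ lampRels) : toL w = 1 :=
  (QuotientGroup.eq_one_iff w).mpr (Subgroup.subset_normalClosure hw)

lemma aL_sq : aL * aL = 1 := by
  have := rel_one (Or.inl rfl : A * A ∈ lampRels)
  simpa [aL, map_mul] using this

/-- The conjugates `x^{-k} a x^k`. -/
def c (k : ℤ) : L := xL ^ (-k) * aL * xL ^ k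

lemma c_zero : c 0 = aL := by simp [c]

lemma comm_aL_c (k : ℤ) : Commute aL (c k) := by
  have h := rel_one (Or.inr ⟨k, rfl⟩ : ⁅A, X ^ (-k) * A * X ^ k⁆ ∈ lampRels)
  rw [map_commutatorElement] at h
  have h' : ⁅aL, c k⁆ = 1 := by
    simpa [aL, xL, c, map_mul, map_zpow] using h
  exact commutatorElement_eq_one_iff_commute.mp h'

lemma c_conj (j k : ℤ) : c (j + k) = xL ^ (-j) * c k * xL ^ j := by
  simp only [c, neg_add, zpow_add]
  group

lemma c_conj_inv (j k : ℤ) : c (j + k) = (xL ^ j)⁻¹ * c k * xL ^ j := by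
  rw [c_conj, zpow_neg]

lemma conj_commute {u v g : L} (h : Commute u v) : Commute (g * u * g⁻¹) (g * v * g⁻¹) := by
  have := h.map (MulAut.conj g).toMonoidHom
  simpa only [MulEquiv.coe_toMonoidHom, MulAut.conj_apply] using this

lemma comm_c (j k : ℤ) : Commute (c j) (c k) := by
  have h : Commute (c 0) (c (k - j)) := c_zero ▸ comm_aL_c (k - j)
  have h2 := conj_commute (g := xL ^ (-j)) h
  have e1 : xL ^ (-j) * c 0 * (xL ^ (-j))⁻¹ = c j := by
    rw [zpow_neg, inv_inv, ← c_conj_inv j 0, add_zero]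
  have e2 : xL ^ (-j) * c (k - j) * (xL ^ (-j))⁻¹ = c k := by
    have h3 := c_conj_inv j (k - j)
    rw [add_sub_cancel] at h3
    rw [zpow_neg, inv_inv, ← h3]
  rwa [e1, e2] at h2

lemma c_sq (k : ℤ) : c k * c k = 1 := by
  have : c k * c k = xL ^ (-k) * (aL * aL) * xL ^ k := by
    simp only [c]; group
  rw [this, aL_sq]; group

/-! ### The commutative subgroup generated by the `c k` -/

def B : Subgroup L := Subgroup.closure (Set.range c)

instance : CommGroup B :=
  Subgroup.closureCommGroupOfComm (by
    rintro _ ⟨j, rfl⟩ _ ⟨k, rfl⟩; exact comm_c j k)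

def cB (k : ℤ) : B := ⟨c k, Subgroup.subset_closure ⟨k, rfl⟩⟩

lemma cB_sq (k : ℤ) : cB k * cB k = 1 := Subtype.ext (c_sq k)

/-- The component homomorphisms `ZMod 2 →+ Additive B`. -/
def e (k : ℤ) : ZMod 2 →+ Additive B :=
  ZMod.lift 2 ⟨zmultiplesHom (Additive B) (Additive.ofMul (cB k)), by
    show ((2 : ℕ) : ℤ) • Additive.ofMul (cB k) = 0
    have h2 : cB k ^ ((2 : ℕ) : ℤ) = 1 := by
      rw [zpow_natCast, pow_two, cB_sq]
    rw [← ofMul_zpow, h2, ofMul_one]⟩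

lemma e_one (k : ℤ) : (e k 1).toMul = cB k := by
  have h1 : ((1 : ℤ) : ZMod 2) = 1 := by decide
  rw [← h1, e, ZMod.lift_coe]
  show ((1 : ℤ) • Additive.ofMul (cB k)).toMul = cB k
  rw [one_zsmul]
  rfl

/-- The homomorphism from the multiplicative finsupp group to `L`. -/
def f₁ : Multiplicative (ℤ →₀ ZMod 2) →* L :=
  B.subtype.comp <| (MulEquiv.multiplicativeAdditive B).toMonoidHom.comp <|
    AddMonoidHom.toMultiplicative (Finsupp.liftAddHom e)

lemma f₁_apply (s : ℤ →₀ ZMod 2) :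
    f₁ (ofAdd s) = (((Finsupp.liftAddHom e s).toMul : B) : L) := rfl

lemma f₁_single (k : ℤ) (v : ZMod 2) :
    f₁ (ofAdd (Finsupp.single k v)) = (((e k v).toMul : B) : L) := by
  rw [f₁_apply]
  exact congrArg (fun s => ((Additive.toMul s : B) : L)) (Finsupp.liftAddHom_apply_single e k v)

lemma f₁_single_one (k : ℤ) : f₁ (ofAdd (Finsupp.single k 1)) = c k := by
  rw [f₁_single, e_one]; rfl

lemma f₁_single_zero (k : ℤ) : f₁ (ofAdd (Finsupp.single k (0 : ZMod 2))) = 1 := by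
  rw [f₁_single, map_zero]
  rfl

/-- ext lemma for monoid homs out of the multiplicative finsupp group -/
lemma mhom_ext {H : Type*} [Monoid H] {F G : Multiplicative (ℤ →₀ ZMod 2) →* H}
    (h : ∀ k v, F (ofAdd (Finsupp.single k v)) = G (ofAdd (Finsupp.single k v))) :
    F = G := by
  refine MonoidHom.ext fun z => ?_
  have key : ∀ f : ℤ →₀ ZMod 2, F (ofAdd f) = G (ofAdd f) := by
    intro f
    induction f using Finsupp.induction with
    | zero => rw [ofAdd_zero, map_one, map_one]
    | single_add k v f _ _ ih => rw [ofAdd_add, map_mul, map_mul, h, ih]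
  exact key (Multiplicative.toAdd z)

lemma zmod2_cases (v : ZMod 2) : v = 0 ∨ v = 1 := by revert v; decide

/-! ### The model `M` -/

/-- The shift automorphisms. -/
def shA (g : ℤ) : (ℤ →₀ ZMod 2) ≃+ (ℤ →₀ ZMod 2) :=
  Finsupp.domCongr (Equiv.subRight g)

lemma shA_single (g k : ℤ) (v : ZMod 2) :
    shA g (Finsupp.single k v) = Finsupp.single (k - g) v := by
  rw [shA, Finsupp.domCongr_apply, Finsupp.equivMapDomain_single, Equiv.subRight_apply]

lemma shA_apply (g : ℤ) (f : ℤ →₀ ZMod 2) (b : ℤ) : shA g f b = f (b + g) := by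
  rw [shA, Finsupp.domCongr_apply, Finsupp.equivMapDomain_apply, Equiv.subRight_symm_apply]

def sh : Multiplicative ℤ →* MulAut (Multiplicative (ℤ →₀ ZMod 2)) :=
  MonoidHom.mk' (fun g => AddEquiv.toMultiplicative (shA (Multiplicative.toAdd g))) (by
    intro g h
    ext z : 1
    show shA (Multiplicative.toAdd (g * h)) (Multiplicative.toAdd z)
        = shA (Multiplicative.toAdd g) (shA (Multiplicative.toAdd h) (Multiplicative.toAdd z))
    set f := Multiplicative.toAdd z
    ext b
    rw [shA_apply, shA_apply, shA_apply, toAdd_mul]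
    congr 1
    ring)

lemma sh_single (g : Multiplicative ℤ) (k : ℤ) (v : ZMod 2) :
    sh g (ofAdd (Finsupp.single k v)) = ofAdd (Finsupp.single (k - Multiplicative.toAdd g) v) := by
  show ofAdd (shA (Multiplicative.toAdd g) (Finsupp.single k v)) = _
  rw [shA_single]

abbrev M := Multiplicative (ℤ →₀ ZMod 2) ⋊[sh] Multiplicative ℤ

/-! ### the homomorphism ψ : L → M -/

def ψf : Gen → M
  | Gen.a => inl (ofAdd (Finsupp.single 0 1))
  | Gen.x => inr (ofAdd 1)

lemma inr_zpow (k : ℤ) : (inr (ofAdd (1 : ℤ)) : M) ^ k = inr (ofAdd k) := by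
  rw [← map_zpow]
  congr 1
  rw [← ofAdd_zsmul]
  congr 1
  simp

lemma single_self_add (k : ℤ) :
    Finsupp.single k (1 : ZMod 2) + Finsupp.single k 1 = 0 := by
  rw [← Finsupp.single_add]
  have : (1 : ZMod 2) + 1 = 0 := by decide
  rw [this, Finsupp.single_zero]

lemma lift_ψf_A : FreeGroup.lift ψf A = inl (ofAdd (Finsupp.single 0 1)) := by
  rw [A, FreeGroup.lift_apply_of]
  rfl

lemma ψf_conj (k : ℤ) :
    FreeGroup.lift ψf (X ^ (-k) * A * X ^ k) = inl (ofAdd (Finsupp.single k 1)) := by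
  have hx : FreeGroup.lift ψf X = inr (ofAdd 1) := by rw [X, FreeGroup.lift_apply_of]; rfl
  have h1 : FreeGroup.lift ψf (X ^ (-k) * A * X ^ k)
      = inr (ofAdd (-k)) * inl (ofAdd (Finsupp.single 0 1)) * inr (ofAdd (-k))⁻¹ := by
    rw [map_mul, map_mul, map_zpow, map_zpow, hx, lift_ψf_A, inr_zpow, inr_zpow]
    have hi : ((ofAdd (-k) : Multiplicative ℤ))⁻¹ = ofAdd k := by
      rw [← ofAdd_neg, neg_neg]
    rw [hi]
  rw [h1, ← inl_aut, sh_single]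
  norm_num

lemma ψrels : ∀ r ∈ lampRels, FreeGroup.lift ψf r = 1 := by
  rintro r (rfl | ⟨k, rfl⟩)
  · rw [map_mul, lift_ψf_A, ← map_mul, ← ofAdd_add, single_self_add, ofAdd_zero, map_one]
  · rw [map_commutatorElement, lift_ψf_A, ψf_conj]
    exact commutatorElement_eq_one_iff_commute.mpr ((Commute.all _ _).map inl)

def ψ : L →* M := PresentedGroup.toGroup ψrels

lemma ψ_x : ψ (toL X) = inr (ofAdd 1) := PresentedGroup.toGroup.of ψrels

lemma ψ_a : ψ (toL A) = inl (ofAdd (Finsupp.single 0 1)) := PresentedGroup.toGroup.of ψrels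

/-! ### the homomorphism χ : M → L with χ ∘ ψ = id -/

def f₂ : Multiplicative ℤ →* L := zpowersHom L xL

lemma χcompat :
    ∀ g : Multiplicative ℤ, f₁.comp (sh g).toMonoidHom
      = (MulAut.conj (f₂ g)).toMonoidHom.comp f₁ := by
  intro g
  apply mhom_ext
  intro k v
  show f₁ (sh g (ofAdd (Finsupp.single k v)))
    = MulAut.conj (f₂ g) (f₁ (ofAdd (Finsupp.single k v)))
  rw [sh_single]
  rcases zmod2_cases v with rfl | rfl
  · rw [f₁_single_zero, f₁_single_zero, map_one]
  · rw [f₁_single_one, f₁_single_one]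
    have hf2 : f₂ g = xL ^ (Multiplicative.toAdd g) := rfl
    rw [hf2, MulAut.conj_apply, ← zpow_neg]
    have h2 := c_conj (-(Multiplicative.toAdd g)) k
    rw [neg_neg] at h2
    rw [show k - Multiplicative.toAdd g = -(Multiplicative.toAdd g) + k by ring, h2]

def χ : M →* L := SemidirectProduct.lift f₁ f₂ χcompat

lemma χψ : χ.comp ψ = MonoidHom.id L := by
  apply PresentedGroup.ext
  intro g
  cases g
  · show χ (ψ (toL A)) = toL A
    rw [ψ_a, χ, SemidirectProduct.lift_inl, f₁_single_one, c_zero]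
    rfl
  · show χ (ψ (toL X)) = toL X
    rw [ψ_x, χ, SemidirectProduct.lift_inr]
    show xL ^ (1 : ℤ) = toL X
    rw [zpow_one]
    rfl

/-! ### the endomorphism Φ of M -/

def T₀ : (ℤ →₀ ZMod 2) →+ (ℤ →₀ ZMod 2) :=
  AddMonoidHom.id _ + (shA (-1)).toAddMonoidHom

lemma T₀_apply (s : ℤ →₀ ZMod 2) : T₀ s = s + shA (-1) s := rfl

lemma T₀_single (k : ℤ) (v : ZMod 2) :
    T₀ (Finsupp.single k v) = Finsupp.single k v + Finsupp.single (k + 1) v := by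
  rw [T₀_apply, shA_single, sub_neg_eq_add]

def T : Multiplicative (ℤ →₀ ZMod 2) →* Multiplicative (ℤ →₀ ZMod 2) :=
  AddMonoidHom.toMultiplicative T₀

lemma T_single (k : ℤ) (v : ZMod 2) :
    T (ofAdd (Finsupp.single k v)) = ofAdd (Finsupp.single k v + Finsupp.single (k + 1) v) := by
  show ofAdd (T₀ (Finsupp.single k v)) = _
  rw [T₀_single]

lemma Φcompat : ∀ g : Multiplicative ℤ, T.comp (sh g).toMonoidHom
    = (sh ((MonoidHom.id (Multiplicative ℤ)) g)).toMonoidHom.comp T := by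
  intro g
  apply mhom_ext
  intro k v
  show T (sh g (ofAdd (Finsupp.single k v))) = sh g (T (ofAdd (Finsupp.single k v)))
  rw [sh_single, T_single, T_single, ofAdd_add, ofAdd_add, map_mul, sh_single, sh_single,
    sub_add_eq_add_sub]

def Φ : M →* M := SemidirectProduct.map T (MonoidHom.id _) Φcompat

lemma T₀_injective : Function.Injective T₀ := by
  have h : ∀ f : ℤ →₀ ZMod 2, T₀ f = 0 → f = 0 := by
    intro f hf
    by_contra hne
    have hs : f.support.Nonempty := Finsupp.support_nonempty_iff.mpr hne
    set k := f.support.max' hs with hk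
    have hmem : k ∈ f.support := f.support.max'_mem hs
    have hk1 : (k + 1) ∉ f.support := by
      intro hmem1
      have := f.support.le_max' _ hmem1
      omega
    have hTk : T₀ f (k + 1) = f k := by
      have h1 : f (k + 1) = 0 := Finsupp.notMem_support_iff.mp hk1
      have h2 : shA (-1) f (k + 1) = f k := by
        rw [shA_apply]
        norm_num
      rw [T₀_apply, Finsupp.add_apply, h1, h2, zero_add]
    rw [hf] at hTk
    rw [Finsupp.coe_zero, Pi.zero_apply] at hTk
    exact (Finsupp.mem_support_iff.mp hmem) hTk.symm
  intro x y hxy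
  have h0 : T₀ (x - y) = 0 := by rw [map_sub, hxy, sub_self]
  exact sub_eq_zero.mp (h _ h0)

lemma Φ_injective : Function.Injective Φ := by
  refine (injective_iff_map_eq_one Φ).mpr fun m hm => ?_
  have hl : T m.left = 1 := congrArg SemidirectProduct.left hm
  have hr : m.right = 1 := congrArg SemidirectProduct.right hm
  have hml : m.left = 1 := by
    have h1 : T₀ (Multiplicative.toAdd m.left) = 0 := hl
    have h2 : T₀ (Multiplicative.toAdd m.left) = T₀ 0 := by rw [h1, map_zero]
    have := T₀_injective h2
    show m.left = ofAdd 0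
    rw [← this]
    rfl
  have : m = ⟨m.left, m.right⟩ := rfl
  rw [this, hml, hr]
  rfl

/-! ### the endomorphism φ of L -/

def φf : Gen → L
  | Gen.a => xL⁻¹ * aL * xL * aL
  | Gen.x => xL

lemma φf_a_eq : φf Gen.a = c 1 * c 0 := by
  show xL⁻¹ * aL * xL * aL = c 1 * c 0
  simp [c]

lemma φrels : ∀ r ∈ lampRels, FreeGroup.lift φf r = 1 := by
  have hA : FreeGroup.lift φf A = c 1 * c 0 := by
    rw [A, FreeGroup.lift_apply_of, φf_a_eq]
  rintro r (rfl | ⟨k, rfl⟩)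
  · rw [map_mul, hA]
    calc c 1 * c 0 * (c 1 * c 0) = c 1 * (c 0 * c 1) * c 0 := by group
    _ = c 1 * (c 1 * c 0) * c 0 := by rw [(comm_c 0 1).eq]
    _ = (c 1 * c 1) * (c 0 * c 0) := by group
    _ = 1 := by rw [c_sq, c_sq, one_mul]
  · rw [map_commutatorElement, hA]
    have hX : FreeGroup.lift φf X = xL := by rw [X, FreeGroup.lift_apply_of]; rfl
    have hconj : FreeGroup.lift φf (X ^ (-k) * A * X ^ k) = c (k + 1) * c k := by
      rw [map_mul, map_mul, map_zpow, map_zpow, hA, hX]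
      have h1 : xL ^ (-k) * (c 1 * c 0) * xL ^ k
          = (xL ^ (-k) * c 1 * xL ^ k) * (xL ^ (-k) * c 0 * xL ^ k) := by group
      rw [h1, ← c_conj, ← c_conj, add_zero]
    rw [hconj]
    refine commutatorElement_eq_one_iff_commute.mpr ?_
    exact ((comm_c 1 (k+1)).mul_right (comm_c 1 k)).mul_left
      ((comm_c 0 (k+1)).mul_right (comm_c 0 k))

def φL : L →* L := PresentedGroup.toGroup φrels

lemma φL_x : φL (toL X) = toL X := PresentedGroup.toGroup.of φrels

lemma φL_a : φL (toL A) = (toL X)⁻¹ * toL A * toL X * toL A :=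
  PresentedGroup.toGroup.of φrels

/-! ### ψ ∘ φ = Φ ∘ ψ -/

lemma key_square : ψ.comp φL = Φ.comp ψ := by
  apply PresentedGroup.ext
  intro g
  cases g
  · show ψ (φL (toL A)) = Φ (ψ (toL A))
    rw [φL_a, ψ_a, Φ, SemidirectProduct.map_inl, T_single]
    rw [map_mul, map_mul, map_mul, map_inv, ψ_x, ψ_a]
    have hi : (inr (ofAdd (1:ℤ)) : M)⁻¹ = inr ((ofAdd (1:ℤ))⁻¹) := by
      rw [MonoidHom.map_inv]
    rw [hi, ← inl_aut_inv]
    have hs : (sh (ofAdd (1:ℤ)))⁻¹ (ofAdd (Finsupp.single 0 1))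
        = ofAdd (Finsupp.single 1 1) := by
      rw [← MonoidHom.map_inv sh (ofAdd (1:ℤ)), sh_single]
      congr 1
    rw [hs, ← map_mul, ← ofAdd_add]
    norm_num [add_comm]
  · show ψ (φL (toL X)) = Φ (ψ (toL X))
    rw [φL_x, ψ_x, Φ, SemidirectProduct.map_inr]
    rfl

lemma φL_injective : Function.Injective φL := by
  refine (injective_iff_map_eq_one φL).mpr fun g hg => ?_
  have h1 : Φ (ψ g) = 1 := by
    have := congrArg (fun F : L →* M => F g) key_square
    simp only [MonoidHom.comp_apply] at this
    rw [← this, hg, map_one]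
  have h2 : ψ g = 1 := (injective_iff_map_eq_one Φ).mp Φ_injective _ h1
  have h3 := congrArg (fun F : L →* L => F g) χψ
  simp only [MonoidHom.comp_apply, MonoidHom.id_apply] at h3
  rw [← h3, h2, map_one]

/-! ### non-surjectivity -/

def εf : Gen → Multiplicative (ZMod 2)
  | Gen.a => ofAdd 1
  | Gen.x => 1

lemma εrels : ∀ r ∈ lampRels, FreeGroup.lift εf r = 1 := by
  rintro r (rfl | ⟨k, rfl⟩)
  · rw [map_mul, A, FreeGroup.lift_apply_of]
    show (ofAdd (1 : ZMod 2)) * ofAdd 1 = 1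
    rw [← ofAdd_add]
    have : (1 : ZMod 2) + 1 = 0 := by decide
    rw [this, ofAdd_zero]
  · rw [map_commutatorElement]
    exact commutatorElement_eq_one_iff_commute.mpr (Commute.all _ _)

def ε : L →* Multiplicative (ZMod 2) := PresentedGroup.toGroup εrels

lemma ε_a : ε (toL A) = ofAdd 1 := PresentedGroup.toGroup.of εrels

lemma ε_x : ε (toL X) = 1 := PresentedGroup.toGroup.of εrels

lemma εφL : ε.comp φL = 1 := by
  apply PresentedGroup.ext
  intro g
  cases g
  · show ε (φL (toL A)) = 1
    rw [φL_a, map_mul, map_mul, map_mul, map_inv, ε_a, ε_x]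
    rw [inv_one, one_mul, mul_one, ← ofAdd_add]
    have : (1 : ZMod 2) + 1 = 0 := by decide
    rw [this, ofAdd_zero]
  · show ε (φL (toL X)) = 1
    rw [φL_x, ε_x]

lemma φL_not_surjective : ¬ Function.Surjective φL := by
  intro hs
  obtain ⟨g, hg⟩ := hs (toL A)
  have h1 : ε (toL A) = 1 := by
    rw [← hg]
    have := congrArg (fun F : L →* Multiplicative (ZMod 2) => F g) εφL
    simpa using this
  rw [ε_a] at h1
  exact absurd h1 (by decide)

end
end LampAux

/-- x ↦ x, a ↦ x⁻¹axa extends to an injective non-surjective endomorphism of L. -/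
theorem injective_non_surjective_endo :
    ∃ φ : L →* L,
      Function.Injective φ ∧ ¬ Function.Surjective φ ∧
      φ (toL X) = toL X ∧
      φ (toL A) = (toL X)⁻¹ * toL A * toL X * toL A := by
  exact ⟨LampAux.φL, LampAux.φL_injective, LampAux.φL_not_surjective,
    LampAux.φL_x, LampAux.φL_a⟩
end

section
/- In the Extended Lamplighter group E = ⟨x, a, t | a² = 1, [x,t] = 1, t⁻¹at = x⁻¹axa⟩, every commutator has order dividing 2: for all u, v ∈ E, ([u,v])² = 1. -/
open scoped commutatorElement

inductive Gen3 : Type | a | x | t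

def Ae : FreeGroup Gen3 := FreeGroup.of Gen3.a
def Xe : FreeGroup Gen3 := FreeGroup.of Gen3.x
def Te : FreeGroup Gen3 := FreeGroup.of Gen3.t

/-- Relators of the Extended Lamplighter group
E = ⟨x, a, t | a² = 1, [x,t] = 1, t⁻¹at = x⁻¹axa⟩. -/
def extRels : Set (FreeGroup Gen3) :=
  {Ae * Ae, ⁅Xe, Te⁆, (Te⁻¹ * Ae * Te) * (Xe⁻¹ * Ae * Xe * Ae)⁻¹}

abbrev E := PresentedGroup extRels

def toE : FreeGroup Gen3 →* E := QuotientGroup.mk' (Subgroup.normalClosure extRels)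

namespace ELamp

def A : E := toE Ae
def X : E := toE Xe
def T : E := toE Te

lemma rel_one {r : FreeGroup Gen3} (h : r ∈ extRels) : toE r = 1 := by
  exact (QuotientGroup.eq_one_iff r).mpr (Subgroup.subset_normalClosure h)

lemma rA : A * A = 1 := by
  have h := rel_one (show Ae * Ae ∈ extRels from Set.mem_insert _ _)
  simpa [A, map_mul] using h

lemma cXT : Commute X T := by
  have h := rel_one (show ⁅Xe, Te⁆ ∈ extRels from
    Set.mem_insert_of_mem _ (Set.mem_insert _ _))
  rw [map_commutatorElement] at h
  exact commutatorElement_eq_one_iff_commute.mp h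

lemma rT : T⁻¹ * A * T = X⁻¹ * A * X * A := by
  have h := rel_one (show (Te⁻¹ * Ae * Te) * (Xe⁻¹ * Ae * Xe * Ae)⁻¹ ∈ extRels from
    Set.mem_insert_of_mem _ (Set.mem_insert_of_mem _ rfl))
  simp only [map_mul, map_inv] at h
  have := mul_inv_eq_one.mp h
  simpa [A, X, T] using this


/-- involutions whose product is an involution commute -/
lemma comm_of_inv {u v : E} (hu : u * u = 1) (hv : v * v = 1)
    (huv : (u * v) * (u * v) = 1) : u * v = v * u := by
  have h2 : u * ((u * v) * (u * v)) * v = (u * u) * ((v * u) * (v * v)) := by group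
  rw [huv, hu, hv] at h2
  simpa using h2

def b (k : ℤ) : E := (X ^ k)⁻¹ * A * X ^ k

lemma b_congr {i j : ℤ} (h : i = j) : b i = b j := by rw [h]

lemma b_sq (k : ℤ) : b k * b k = 1 := by
  have h : b k * b k = (X ^ k)⁻¹ * (A * A) * X ^ k := by rw [b]; group
  rw [h, rA]; group

lemma bt (k : ℤ) : T⁻¹ * b k * T = b (k + 1) * b k := by
  have hC : Commute (X ^ k) T := cXT.zpow_left k
  have h1 : T⁻¹ * b k * T = (T⁻¹ * (X ^ k)⁻¹) * A * (X ^ k * T) := by rw [b]; group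
  rw [h1, hC.eq, ← hC.inv_left.inv_right.eq]
  have h2 : (X ^ k)⁻¹ * T⁻¹ * A * (T * X ^ k) = (X ^ k)⁻¹ * (T⁻¹ * A * T) * X ^ k := by
    group
  rw [h2, rT]
  rw [b, b]; group

lemma L (m : ℕ) (k : ℤ) :
    (T ^ (2 ^ m : ℕ))⁻¹ * b k * T ^ (2 ^ m : ℕ) = b (k + 2 ^ m) * b k := by
  induction m generalizing k with
  | zero =>
    simpa using bt k
  | succ m ih =>
    have hn : (2 : ℕ) ^ (m + 1) = 2 ^ m + 2 ^ m := by ring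
    rw [hn, pow_add]
    have e1 : (T ^ (2 ^ m : ℕ) * T ^ (2 ^ m : ℕ))⁻¹ * b k * (T ^ (2 ^ m : ℕ) * T ^ (2 ^ m : ℕ))
        = (T ^ (2 ^ m : ℕ))⁻¹ * ((T ^ (2 ^ m : ℕ))⁻¹ * b k * T ^ (2 ^ m : ℕ)) * T ^ (2 ^ m : ℕ) := by
      group
    rw [e1, ih k]
    have e2 : (T ^ (2 ^ m : ℕ))⁻¹ * (b (k + 2 ^ m) * b k) * T ^ (2 ^ m : ℕ)
        = ((T ^ (2 ^ m : ℕ))⁻¹ * b (k + 2 ^ m) * T ^ (2 ^ m : ℕ))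
          * ((T ^ (2 ^ m : ℕ))⁻¹ * b k * T ^ (2 ^ m : ℕ)) := by group
    rw [e2, ih (k + 2 ^ m), ih k]
    have e3 : b (k + 2 ^ m + 2 ^ m) * b (k + 2 ^ m) * (b (k + 2 ^ m) * b k)
        = b (k + 2 ^ m + 2 ^ m) * ((b (k + 2 ^ m) * b (k + 2 ^ m)) * b k) := by group
    rw [e3, b_sq, one_mul]
    have e4 : k + (2 : ℤ) ^ m + 2 ^ m = k + 2 ^ (m + 1) := by ring
    rw [b_congr e4]

lemma comm_pow2 (m : ℕ) (k : ℤ) : b k * b (k + 2 ^ m) = b (k + 2 ^ m) * b k := by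
  have hsq : (b (k + 2 ^ m) * b k) * (b (k + 2 ^ m) * b k) = 1 := by
    rw [← L m k]
    have h : ((T ^ (2 ^ m : ℕ))⁻¹ * b k * T ^ (2 ^ m : ℕ))
        * ((T ^ (2 ^ m : ℕ))⁻¹ * b k * T ^ (2 ^ m : ℕ))
        = (T ^ (2 ^ m : ℕ))⁻¹ * (b k * b k) * T ^ (2 ^ m : ℕ) := by group
    rw [h, b_sq]; group
  exact (comm_of_inv (b_sq _) (b_sq _) hsq).symm


lemma comm_nat : ∀ d : ℕ, ∀ k : ℤ, b k * b (k + (d : ℤ)) = b (k + (d : ℤ)) * b k := by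
  intro d
  induction d using Nat.strong_induction_on with
  | _ d IH =>
  intro k
  rcases Nat.eq_zero_or_pos d with hd | hd
  · subst hd; simp
  by_cases hpow : ∃ m : ℕ, d = 2 ^ m
  · obtain ⟨m, rfl⟩ := hpow
    have : ((2 ^ m : ℕ) : ℤ) = (2 : ℤ) ^ m := by push_cast; ring
    rw [this]
    exact comm_pow2 m k
  · set m := Nat.log 2 d with hm
    have h1 : 2 ^ m ≤ d := Nat.pow_log_le_self 2 (by omega)
    have h2 : d < 2 ^ (m + 1) := Nat.lt_pow_succ_log_self (by norm_num) d
    have hne : d ≠ 2 ^ m := fun h => hpow ⟨m, h⟩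
    have h1' : 2 ^ m < d := lt_of_le_of_ne h1 (Ne.symm hne)
    set r : ℕ := d - 2 ^ m with hr
    have hrd : d = 2 ^ m + r := by omega
    have hr1 : 1 ≤ r := by omega
    have hrm : r < 2 ^ m := by
      have : 2 ^ (m + 1) = 2 ^ m + 2 ^ m := by ring
      omega
    -- notation
    set n : ℤ := (2 : ℤ) ^ m with hn
    have hcast : ((2 ^ m : ℕ) : ℤ) = n := by push_cast; rw [hn]
    set u := b (k + n)
    set v := b k
    set w := b (k + n + (r : ℤ))
    set z := b (k + (r : ℤ))
    -- conjugate the distance-r commutation by T^(2^m)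
    have hvz : v * z = z * v := IH r (by omega) k
    have H0 : (T ^ (2 ^ m : ℕ))⁻¹ * (b k * b (k + (r : ℤ))) * T ^ (2 ^ m : ℕ)
        = (T ^ (2 ^ m : ℕ))⁻¹ * (b (k + (r : ℤ)) * b k) * T ^ (2 ^ m : ℕ) := by
      rw [hvz]
    have e1 : (T ^ (2 ^ m : ℕ))⁻¹ * (b k * b (k + (r : ℤ))) * T ^ (2 ^ m : ℕ)
        = ((T ^ (2 ^ m : ℕ))⁻¹ * b k * T ^ (2 ^ m : ℕ))
          * ((T ^ (2 ^ m : ℕ))⁻¹ * b (k + (r : ℤ)) * T ^ (2 ^ m : ℕ)) := by group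
    have e2 : (T ^ (2 ^ m : ℕ))⁻¹ * (b (k + (r : ℤ)) * b k) * T ^ (2 ^ m : ℕ)
        = ((T ^ (2 ^ m : ℕ))⁻¹ * b (k + (r : ℤ)) * T ^ (2 ^ m : ℕ))
          * ((T ^ (2 ^ m : ℕ))⁻¹ * b k * T ^ (2 ^ m : ℕ)) := by group
    rw [e1, e2, L m k, L m (k + (r : ℤ))] at H0
    have ew : b (k + (r : ℤ) + 2 ^ m) = w := b_congr (by rw [hn]; ring)
    have eu : b (k + 2 ^ m) = u := b_congr (by rw [hn])
    rw [ew, eu] at H0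
    -- H0 : (u * v) * (w * z) = (w * z) * (u * v)
    have czu : z * u = u * z := by
      have := IH (2 ^ m - r) (by omega) (k + (r : ℤ))
      have e : k + (r : ℤ) + ((2 ^ m - r : ℕ) : ℤ) = k + n := by
        rw [hn]; push_cast [Nat.cast_sub (le_of_lt hrm)]; ring
      rwa [b_congr e] at this
    have cuw : u * w = w * u := by
      have := IH r (by omega) (k + n)
      exact this
    have cuv : u * v = v * u := by
      have := comm_pow2 m k
      rw [eu] at this
      exact this.symm
    -- goal : v * b (k + d) = b (k + d) * v ; b (k + d) = w
    have egoal : b (k + (d : ℤ)) = w := b_congr (by rw [hn, hrd]; push_cast; ring)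
    rw [egoal]
    -- derive v * w = w * v
    have h1' : u * (v * w) * z = (u * v) * (w * z) := by group
    have h2' : u * (w * v) * z = (w * z) * (u * v) := by
      calc u * (w * v) * z = (u * w) * (v * z) := by group
        _ = (w * u) * (z * v) := by rw [cuw, hvz]
        _ = w * (u * z) * v := by group
        _ = w * (z * u) * v := by rw [← czu]
        _ = (w * z) * (u * v) := by group
    have hfin : u * (v * w) * z = u * (w * v) * z := by rw [h1', H0, ← h2']
    have := mul_right_cancel hfin
    exact mul_left_cancel this

lemma comm_b (i j : ℤ) : Commute (b i) (b j) := by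
  rcases le_total i j with h | h
  · have e : i + ((j - i).toNat : ℤ) = j := by omega
    have := comm_nat (j - i).toNat i
    rw [b_congr e] at this
    exact this
  · have e : j + ((i - j).toNat : ℤ) = i := by omega
    have := comm_nat (i - j).toNat j
    rw [b_congr e] at this
    exact this.symm


/-- general: a subgroup generated by pairwise commuting elements is abelian -/
lemma closure_comm {G : Type*} [Group G] {s : Set G}
    (hs : ∀ a ∈ s, ∀ c ∈ s, a * c = c * a) :
    ∀ g ∈ Subgroup.closure s, ∀ h ∈ Subgroup.closure s, g * h = h * g := by
  have h1 : Subgroup.closure s ≤ Subgroup.centralizer s := by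
    rw [Subgroup.closure_le]
    intro a ha
    rw [SetLike.mem_coe, Subgroup.mem_centralizer_iff]
    intro c hc
    exact hs c hc a ha
  have h2 : Subgroup.closure s ≤ Subgroup.centralizer (Subgroup.closure s : Set G) := by
    rw [Subgroup.closure_le]
    intro a ha
    rw [SetLike.mem_coe, Subgroup.mem_centralizer_iff]
    intro g hg
    exact (Subgroup.mem_centralizer_iff.mp (h1 hg) a ha).symm
  intro g hg h hh
  exact Subgroup.mem_centralizer_iff.mp (h2 hh) g hg

/-- general: closure of pairwise-commuting involutions has exponent 2 -/
lemma closure_sq {G : Type*} [Group G] {s : Set G}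
    (hs : ∀ a ∈ s, ∀ c ∈ s, a * c = c * a)
    (h2 : ∀ a ∈ s, a * a = 1) :
    ∀ g ∈ Subgroup.closure s, g * g = 1 := by
  intro g hg
  induction hg using Subgroup.closure_induction with
  | mem a ha => exact h2 a ha
  | one => simp
  | mul x y hx hy px py =>
    have hcomm : y * x = x * y := closure_comm hs y hy x hx
    calc (x * y) * (x * y) = x * (y * x) * y := by group
      _ = x * (x * y) * y := by rw [hcomm]
      _ = (x * x) * (y * y) := by group
      _ = 1 := by rw [px, py, one_mul]
  | inv x hx px =>
    calc x⁻¹ * x⁻¹ = (x * x)⁻¹ := by group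
      _ = 1 := by rw [px]; simp

def M : Subgroup E := Subgroup.closure (Set.range b)

lemma M_comm : ∀ g ∈ M, ∀ h ∈ M, g * h = h * g :=
  closure_comm (by rintro _ ⟨i, rfl⟩ _ ⟨j, rfl⟩; exact comm_b i j)

lemma b_mem_M (k : ℤ) : b k ∈ M := Subgroup.subset_closure ⟨k, rfl⟩

lemma A_eq_b0 : A = b 0 := by simp [b]

lemma A_mem_M : A ∈ M := A_eq_b0 ▸ b_mem_M 0

lemma M_conjT : ∀ g ∈ M, T⁻¹ * g * T ∈ M := by
  intro g hg
  induction hg using Subgroup.closure_induction with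
  | mem a ha =>
    obtain ⟨k, rfl⟩ := ha
    rw [bt k]
    exact mul_mem (b_mem_M _) (b_mem_M _)
  | one => simpa using one_mem M
  | mul x y hx hy px py =>
    have e : T⁻¹ * (x * y) * T = (T⁻¹ * x * T) * (T⁻¹ * y * T) := by group
    rw [e]; exact mul_mem px py
  | inv x hx px =>
    have e : T⁻¹ * x⁻¹ * T = (T⁻¹ * x * T)⁻¹ := by group
    rw [e]; exact inv_mem px

lemma M_conjTpow : ∀ n : ℕ, ∀ g ∈ M, (T ^ n)⁻¹ * g * T ^ n ∈ M := by
  intro n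
  induction n with
  | zero => intro g hg; simpa using hg
  | succ n ih =>
    intro g hg
    have e : (T ^ (n + 1))⁻¹ * g * T ^ (n + 1)
        = T⁻¹ * ((T ^ n)⁻¹ * g * T ^ n) * T := by
      rw [pow_succ]; group
    rw [e]
    exact M_conjT _ (ih g hg)

def c (i j : ℤ) : E := (X ^ i * T ^ j)⁻¹ * A * (X ^ i * T ^ j)

lemma c_eq (i j : ℤ) : c i j = (T ^ j)⁻¹ * b i * T ^ j := by rw [c, b]; group

lemma c_sq (i j : ℤ) : c i j * c i j = 1 := by
  have h : c i j * c i j = (X ^ i * T ^ j)⁻¹ * (A * A) * (X ^ i * T ^ j) := by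
    rw [c]; group
  rw [h, rA]; group

lemma comm_A_c (i j : ℤ) : A * c i j = c i j * A := by
  rw [c_eq]
  rcases le_total 0 j with hj | hj
  · -- j ≥ 0 : c i j ∈ M
    obtain ⟨n, rfl⟩ := Int.eq_ofNat_of_zero_le hj
    rw [zpow_natCast]
    exact M_comm A A_mem_M _ (M_conjTpow n (b i) (b_mem_M i))
  · -- j ≤ 0
    obtain ⟨n, rfl⟩ := Int.exists_eq_neg_ofNat hj
    have e : (T ^ (-(n : ℤ)))⁻¹ * b i * T ^ (-(n : ℤ))
        = T ^ n * ((T ^ n)⁻¹ * (T ^ n * b i * (T ^ n)⁻¹) * T ^ n) * (T ^ n)⁻¹ := by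
      rw [zpow_neg, zpow_natCast]; group
    have key : ((T ^ n)⁻¹ * A * T ^ n) * b i = b i * ((T ^ n)⁻¹ * A * T ^ n) :=
      M_comm _ (M_conjTpow n A A_mem_M) _ (b_mem_M i)
    have e2 : A * (T ^ n * b i * (T ^ n)⁻¹)
        = T ^ n * (((T ^ n)⁻¹ * A * T ^ n) * b i) * (T ^ n)⁻¹ := by group
    have e3 : (T ^ n * b i * (T ^ n)⁻¹) * A
        = T ^ n * (b i * ((T ^ n)⁻¹ * A * T ^ n)) * (T ^ n)⁻¹ := by group
    have e4 : (T ^ (-(n : ℤ)))⁻¹ * b i * T ^ (-(n : ℤ)) = T ^ n * b i * (T ^ n)⁻¹ := by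
      rw [zpow_neg, zpow_natCast]; group
    rw [e4, e2, key, ← e3]


lemma c_congr {i j k l : ℤ} (h1 : i = k) (h2 : j = l) : c i j = c k l := by rw [h1, h2]

lemma xt_mul (p q i j : ℤ) : (X ^ p * T ^ q) * (X ^ i * T ^ j) = X ^ (p + i) * T ^ (q + j) := by
  have hc : T ^ q * X ^ i = X ^ i * T ^ q := ((cXT.zpow_left i).zpow_right q).eq.symm
  calc (X ^ p * T ^ q) * (X ^ i * T ^ j) = X ^ p * (T ^ q * X ^ i) * T ^ j := by group
    _ = X ^ p * (X ^ i * T ^ q) * T ^ j := by rw [hc]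
    _ = (X ^ p * X ^ i) * (T ^ q * T ^ j) := by group
    _ = X ^ (p + i) * T ^ (q + j) := by rw [← zpow_add, ← zpow_add]

lemma conj_c (p q i j : ℤ) :
    (X ^ p * T ^ q)⁻¹ * c i j * (X ^ p * T ^ q) = c (i + p) (j + q) := by
  rw [c, c, ← xt_mul i j p q]; group

lemma xt_inv (p q : ℤ) : (X ^ p * T ^ q)⁻¹ = X ^ (-p) * T ^ (-q) := by
  have hc : T ^ (-q) * X ^ (-p) = X ^ (-p) * T ^ (-q) :=
    ((cXT.zpow_left (-p)).zpow_right (-q)).eq.symm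
  rw [mul_inv_rev, ← zpow_neg, ← zpow_neg, hc]

lemma conj_c' (p q i j : ℤ) :
    (X ^ p * T ^ q) * c i j * (X ^ p * T ^ q)⁻¹ = c (i - p) (j - q) := by
  have h := conj_c (-p) (-q) i j
  rw [← xt_inv, inv_inv] at h
  rw [h]
  exact c_congr (by ring) (by ring)

lemma comm_cc (i j k l : ℤ) : c i j * c k l = c k l * c i j := by
  have h := comm_A_c (k - i) (l - j)
  have hc : (X ^ i * T ^ j)⁻¹ * (A * c (k - i) (l - j)) * (X ^ i * T ^ j)
      = (X ^ i * T ^ j)⁻¹ * (c (k - i) (l - j) * A) * (X ^ i * T ^ j) := by rw [h]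
  have e1 : (X ^ i * T ^ j)⁻¹ * (A * c (k - i) (l - j)) * (X ^ i * T ^ j)
      = ((X ^ i * T ^ j)⁻¹ * A * (X ^ i * T ^ j))
        * ((X ^ i * T ^ j)⁻¹ * c (k - i) (l - j) * (X ^ i * T ^ j)) := by group
  have e2 : (X ^ i * T ^ j)⁻¹ * (c (k - i) (l - j) * A) * (X ^ i * T ^ j)
      = ((X ^ i * T ^ j)⁻¹ * c (k - i) (l - j) * (X ^ i * T ^ j))
        * ((X ^ i * T ^ j)⁻¹ * A * (X ^ i * T ^ j)) := by group
  rw [e1, e2, conj_c i j (k - i) (l - j)] at hc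
  have ecd : (X ^ i * T ^ j)⁻¹ * A * (X ^ i * T ^ j) = c i j := rfl
  rw [ecd] at hc
  rw [c_congr (show k - i + i = k by ring) (show l - j + j = l by ring)] at hc
  exact hc

def S : Set E := {g | ∃ i j : ℤ, g = c i j}

def H : Subgroup E := Subgroup.closure S

lemma c_mem_H (i j : ℤ) : c i j ∈ H := Subgroup.subset_closure ⟨i, j, rfl⟩

lemma S_pair : ∀ a ∈ S, ∀ g ∈ S, a * g = g * a := by
  rintro a ⟨i, j, rfl⟩ g ⟨k, l, rfl⟩
  exact comm_cc i j k l

lemma H_comm : ∀ g ∈ H, ∀ h ∈ H, g * h = h * g := closure_comm S_pair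

lemma H_sq : ∀ g ∈ H, g * g = 1 :=
  closure_sq S_pair (by rintro a ⟨i, j, rfl⟩; exact c_sq i j)

lemma A_eq_c00 : A = c 0 0 := by simp [c]

lemma A_mem_H : A ∈ H := A_eq_c00 ▸ c_mem_H 0 0

lemma A_inv : A⁻¹ = A := inv_eq_of_mul_eq_one_right rA

lemma conj_mem_H (g : E) (hg : ∀ i j : ℤ, g * c i j * g⁻¹ ∈ H) :
    ∀ h ∈ H, g * h * g⁻¹ ∈ H := by
  intro h hh
  induction hh using Subgroup.closure_induction with
  | mem a ha => obtain ⟨i, j, rfl⟩ := ha; exact hg i j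
  | one => simpa using one_mem H
  | mul x y hx hy px py =>
    have e : g * (x * y) * g⁻¹ = (g * x * g⁻¹) * (g * y * g⁻¹) := by group
    rw [e]; exact mul_mem px py
  | inv x hx px =>
    have e : g * x⁻¹ * g⁻¹ = (g * x * g⁻¹)⁻¹ := by group
    rw [e]; exact inv_mem px

lemma gen_top : Subgroup.closure ({A, X, T} : Set E) = ⊤ := by
  have hsur : Function.Surjective toE := QuotientGroup.mk'_surjective _
  have h1 : Subgroup.map toE (Subgroup.closure (Set.range (FreeGroup.of : Gen3 → FreeGroup Gen3)))
      = Subgroup.closure (toE '' Set.range FreeGroup.of) := MonoidHom.map_closure _ _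
  rw [FreeGroup.closure_range_of] at h1
  have h2 : Subgroup.map toE ⊤ = ⊤ := Subgroup.map_top_of_surjective toE hsur
  have h3 : toE '' Set.range (FreeGroup.of : Gen3 → FreeGroup Gen3) = {A, X, T} := by
    ext g
    constructor
    · rintro ⟨-, ⟨v, rfl⟩, rfl⟩
      cases v
      · exact Or.inl rfl
      · exact Or.inr (Or.inl rfl)
      · exact Or.inr (Or.inr rfl)
    · rintro (rfl | rfl | rfl)
      · exact ⟨Ae, ⟨Gen3.a, rfl⟩, rfl⟩
      · exact ⟨Xe, ⟨Gen3.x, rfl⟩, rfl⟩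
      · exact ⟨Te, ⟨Gen3.t, rfl⟩, rfl⟩
  rw [h3, h2] at h1
  exact h1.symm

lemma H_conj_pair : ∀ g : E, (∀ h ∈ H, g * h * g⁻¹ ∈ H) ∧ (∀ h ∈ H, g⁻¹ * h * g ∈ H) := by
  intro g
  have hg : g ∈ Subgroup.closure ({A, X, T} : Set E) := by rw [gen_top]; trivial
  induction hg using Subgroup.closure_induction with
  | mem x hx =>
    rcases hx with rfl | rfl | rfl
    · constructor
      · apply conj_mem_H
        intro i j
        have e : A * c i j * A⁻¹ = c i j := by
          rw [A_inv]
          calc A * c i j * A = (c i j * A) * A := by rw [comm_A_c]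
            _ = c i j * (A * A) := by group
            _ = c i j := by rw [rA, mul_one]
        rw [e]; exact c_mem_H i j
      · apply conj_mem_H
        intro i j
        have e : A⁻¹ * c i j * (A⁻¹)⁻¹ = c i j := by
          rw [inv_inv, A_inv]
          calc A * c i j * A = (c i j * A) * A := by rw [comm_A_c]
            _ = c i j * (A * A) := by group
            _ = c i j := by rw [rA, mul_one]
        rw [e]
        exact c_mem_H i j
    · constructor
      · apply conj_mem_H
        intro i j
        have e : X * c i j * X⁻¹ = c (i - 1) (j - 0) := by
          have := conj_c' 1 0 i j
          simpa using this
        rw [e]; exact c_mem_H _ _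
      · apply conj_mem_H
        intro i j
        have e : X⁻¹ * c i j * (X⁻¹)⁻¹ = c (i + 1) (j + 0) := by
          rw [inv_inv]
          have := conj_c 1 0 i j
          simpa using this
        rw [e]; exact c_mem_H _ _
    · constructor
      · apply conj_mem_H
        intro i j
        have e : T * c i j * T⁻¹ = c (i - 0) (j - 1) := by
          have := conj_c' 0 1 i j
          simpa using this
        rw [e]; exact c_mem_H _ _
      · apply conj_mem_H
        intro i j
        have e : T⁻¹ * c i j * (T⁻¹)⁻¹ = c (i + 0) (j + 1) := by
          rw [inv_inv]
          have := conj_c 0 1 i j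
          simpa using this
        rw [e]; exact c_mem_H _ _
  | one => constructor <;> intro h hh <;> simpa using hh
  | mul x y hx hy px py =>
    constructor
    · intro h hh
      have e : (x * y) * h * (x * y)⁻¹ = x * (y * h * y⁻¹) * x⁻¹ := by group
      rw [e]; exact px.1 _ (py.1 h hh)
    · intro h hh
      have e : (x * y)⁻¹ * h * (x * y) = y⁻¹ * (x⁻¹ * h * x) * y := by group
      rw [e]; exact py.2 _ (px.2 h hh)
  | inv x hx px =>
    constructor
    · intro h hh
      rw [show x⁻¹ * h * (x⁻¹)⁻¹ = x⁻¹ * h * x by rw [inv_inv]]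
      exact px.2 h hh
    · intro h hh
      rw [show (x⁻¹)⁻¹ * h * x⁻¹ = x * h * x⁻¹ by rw [inv_inv]]
      exact px.1 h hh

instance H_normal : H.Normal := ⟨fun h hh g => (H_conj_pair g).1 h hh⟩


def piH : E →* E ⧸ H := QuotientGroup.mk' H

lemma piH_A : piH A = 1 := (QuotientGroup.eq_one_iff A).mpr A_mem_H

lemma Q_gen : Subgroup.closure ({piH A, piH X, piH T} : Set (E ⧸ H)) = ⊤ := by
  have h1 : Subgroup.map piH (Subgroup.closure ({A, X, T} : Set E))
      = Subgroup.closure (piH '' {A, X, T}) := MonoidHom.map_closure _ _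
  rw [gen_top, Subgroup.map_top_of_surjective piH (QuotientGroup.mk'_surjective H)] at h1
  have h2 : piH '' {A, X, T} = {piH A, piH X, piH T} := by
    rw [Set.image_insert_eq, Set.image_insert_eq, Set.image_singleton]
  rw [h2] at h1
  exact h1.symm

lemma Q_comm (q r : E ⧸ H) : q * r = r * q := by
  have hpair : ∀ a ∈ ({piH A, piH X, piH T} : Set (E ⧸ H)),
      ∀ g ∈ ({piH A, piH X, piH T} : Set (E ⧸ H)), a * g = g * a := by
    have hxt : piH X * piH T = piH T * piH X := by
      rw [← map_mul, ← map_mul, cXT.eq]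
    rintro a (rfl | rfl | rfl) g (rfl | rfl | rfl) <;>
      simp [piH_A, hxt]
  have h := closure_comm hpair
  rw [Q_gen] at h
  exact h q (Subgroup.mem_top q) r (Subgroup.mem_top r)

end ELamp

open ELamp in
/-- Every commutator in the Extended Lamplighter group squares to the identity. -/
theorem commutator_squared (u v : E) : ⁅u, v⁆ ^ 2 = 1 := by
  have hmem : ⁅u, v⁆ ∈ H := by
    have h1 : piH ⁅u, v⁆ = 1 := by
      rw [map_commutatorElement]
      exact commutatorElement_eq_one_iff_commute.mpr (Q_comm (piH u) (piH v))
    exact (QuotientGroup.eq_one_iff _).mp h1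
  rw [pow_two]
  exact H_sq _ hmem
end

section
/- The Lamplighter group L is not finitely presentable, but it embeds in the finitely presented group E = ⟨x, a, t | a² = 1, [x,t] = 1, t⁻¹at = x⁻¹axa⟩ via x ↦ x, a ↦ a. -/
open scoped commutatorElement

-- [w.lean contents assumed above; for testing, re-import by pasting]

abbrev V := ℤ →₀ ZMod 2

def sh (n : ℤ) : V ≃+ V := Finsupp.domCongr (Equiv.addRight n)

lemma sh_apply (n : ℤ) (f : V) (k : ℤ) : sh n f k = f (k - n) := rfl

lemma sh_single (n k : ℤ) (v : ZMod 2) :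
    sh n (Finsupp.single k v) = Finsupp.single (k + n) v := by
  show Finsupp.equivMapDomain (Equiv.addRight n) (Finsupp.single k v) = _
  rw [Finsupp.equivMapDomain_single]; rfl

lemma sh_sh (n m : ℤ) (f : V) : sh n (sh m f) = sh (n + m) f := by
  refine Finsupp.ext fun k => ?_
  rw [sh_apply, sh_apply, sh_apply, sub_sub]

lemma sh_zero (f : V) : sh 0 f = f := by
  refine Finsupp.ext fun k => ?_
  rw [sh_apply, sub_zero]

lemma V_add_self (f : V) : f + f = 0 := by
  refine Finsupp.ext fun k => ?_
  rw [Finsupp.add_apply, Finsupp.zero_apply, CharTwo.add_self_eq_zero]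

lemma two_mul_zmod (a : ZMod 2) : a * 2 = 0 := by
  have h : (2 : ZMod 2) = 0 := rfl
  rw [h, mul_zero]

lemma three_mul_zmod (a : ZMod 2) : a * 3 = a := by
  have h : (3 : ZMod 2) = 1 := rfl
  rw [h, mul_one]

structure Cocycle where
  B : V → V → ZMod 2
  addl : ∀ f g h, B (f + g) h = B f h + B g h
  addr : ∀ f g h, B f (g + h) = B f g + B f h
  shift : ∀ n f g, B (sh n f) (sh n g) = B f g

lemma Cocycle.zerol (c : Cocycle) (g : V) : c.B 0 g = 0 := by
  have := c.addl 0 0 g; simpa using this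

lemma Cocycle.zeror (c : Cocycle) (g : V) : c.B g 0 = 0 := by
  have := c.addr g 0 0; simpa using this

@[ext] structure W (c : Cocycle) where
  f : V
  e : ZMod 2
  n : ℤ

variable {c : Cocycle}

noncomputable instance : Group (W c) where
  mul u v := ⟨u.f + sh u.n v.f, u.e + v.e + c.B u.f (sh u.n v.f), u.n + v.n⟩
  one := ⟨0, 0, 0⟩
  inv u := ⟨sh (-u.n) u.f, u.e + c.B u.f u.f, -u.n⟩
  mul_assoc u v w := by
    refine W.ext ?_ ?_ ?_
    · show (u.f + sh u.n v.f) + sh (u.n + v.n) w.f =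
        u.f + sh u.n (v.f + sh v.n w.f)
      rw [map_add, sh_sh, add_assoc]
    · show (u.e + v.e + c.B u.f (sh u.n v.f)) + w.e
          + c.B (u.f + sh u.n v.f) (sh (u.n + v.n) w.f) =
        u.e + (v.e + w.e + c.B v.f (sh v.n w.f))
          + c.B u.f (sh u.n (v.f + sh v.n w.f))
      rw [map_add, c.addl, c.addr, ← sh_sh, c.shift]
      ring
    · show u.n + v.n + w.n = u.n + (v.n + w.n); ring
  one_mul u := by
    refine W.ext ?_ ?_ ?_
    · show (0 : V) + sh 0 u.f = u.f; rw [sh_zero, zero_add]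
    · show 0 + u.e + c.B 0 (sh 0 u.f) = u.e; rw [c.zerol]; ring
    · show 0 + u.n = u.n; ring
  mul_one u := by
    refine W.ext ?_ ?_ ?_
    · show u.f + sh u.n 0 = u.f; rw [map_zero, add_zero]
    · show u.e + 0 + c.B u.f (sh u.n 0) = u.e; rw [map_zero, c.zeror]; ring
    · show u.n + 0 = u.n; ring
  inv_mul_cancel u := by
    refine W.ext ?_ ?_ ?_
    · show sh (-u.n) u.f + sh (-u.n) u.f = 0
      rw [V_add_self]
    · show (u.e + c.B u.f u.f) + u.e + c.B (sh (-u.n) u.f) (sh (-u.n) u.f) = 0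
      rw [c.shift]; ring_nf; rw [two_mul_zmod, two_mul_zmod, add_zero]
    · show -u.n + u.n = 0; ring

lemma W_mul (u v : W c) :
    u * v = ⟨u.f + sh u.n v.f, u.e + v.e + c.B u.f (sh u.n v.f), u.n + v.n⟩ := rfl
lemma W_one : (1 : W c) = ⟨0,0,0⟩ := rfl
lemma W_inv (u : W c) : u⁻¹ = ⟨sh (-u.n) u.f, u.e + c.B u.f u.f, -u.n⟩ := rfl

/-! Generators of W and basic computations -/

noncomputable def aW : W c := ⟨Finsupp.single 0 1, 0, 0⟩
noncomputable def xW : W c := ⟨0, 0, 1⟩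

noncomputable def xWHom : Multiplicative ℤ →* W c where
  toFun m := ⟨0, 0, m.toAdd⟩
  map_one' := rfl
  map_mul' m m' := by
    refine (W.ext ?_ ?_ ?_).symm
    · show (0 : V) + sh _ 0 = 0; rw [map_zero, add_zero]
    · show 0 + 0 + c.B 0 (sh _ 0) = 0; rw [c.zerol]; ring
    · rfl

lemma xW_zpow (k : ℤ) : (xW : W c) ^ k = ⟨0, 0, k⟩ := by
  have h : zpowersHom (W c) xW = xWHom := by
    refine MonoidHom.ext_mint ?_
    rw [zpowersHom_apply]; show xW ^ (1 : ℤ) = _; rw [zpow_one]; rfl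
  have := DFunLike.congr_fun h (Multiplicative.ofAdd k)
  rw [zpowersHom_apply] at this
  exact this

lemma W_e_mul (f g : V) (e e' : ZMod 2) :
    (⟨f, e, 0⟩ : W c) * ⟨g, e', 0⟩ = ⟨f + g, e + e' + c.B f g, 0⟩ := by
  rw [W_mul]; refine W.ext ?_ ?_ ?_ <;> simp [sh_zero]

lemma W_conj_single (k : ℤ) :
    (xW : W c) ^ (-k) * aW * xW ^ k = ⟨Finsupp.single (-k) 1, 0, 0⟩ := by
  rw [xW_zpow, xW_zpow, aW, W_mul, W_mul]
  refine W.ext ?_ ?_ ?_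
  · show (0 : V) + sh (-k) (Finsupp.single 0 1) + sh (-k + 0) 0 = Finsupp.single (-k) 1
    rw [map_zero, add_zero, sh_single, zero_add, zero_add]
  · show 0 + 0 + c.B 0 (sh (-k) (Finsupp.single 0 1)) + 0
        + c.B (0 + sh (-k) (Finsupp.single 0 1)) (sh (-k + 0) 0) = 0
    rw [map_zero, c.zerol, c.zeror]; ring
  · show -k + 0 + k = 0; ring

lemma W_sq (f : V) (e : ZMod 2) : (⟨f, e, 0⟩ : W c) * ⟨f, e, 0⟩ = ⟨0, c.B f f, 0⟩ := by
  rw [W_e_mul, V_add_self]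
  refine W.ext rfl ?_ rfl
  show e + e + c.B f f = c.B f f
  rw [CharTwo.add_self_eq_zero, zero_add]

lemma W_inv_e (f : V) (e : ZMod 2) : (⟨f, e, 0⟩ : W c)⁻¹ = ⟨f, e + c.B f f, 0⟩ := by
  rw [W_inv]
  exact W.ext (by rw [neg_zero, sh_zero]) rfl (by rw [neg_zero])

lemma W_commutator (f g : V) (e e' : ZMod 2) :
    ⁅(⟨f, e, 0⟩ : W c), (⟨g, e', 0⟩ : W c)⁆ = (⟨0, c.B f g + c.B g f, 0⟩ : W c) := by
  rw [commutatorElement_def, W_inv_e, W_inv_e, W_e_mul, W_e_mul, W_e_mul]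
  refine W.ext ?_ ?_ rfl
  · show f + g + f + g = 0
    calc f + g + f + g = (f + g) + (f + g) := by abel
      _ = 0 := V_add_self _
  · show e + e' + c.B f g + (e + c.B f f) + c.B (f + g) f + (e' + c.B g g)
        + c.B (f + g + f) g = c.B f g + c.B g f
    rw [c.addl, c.addl, c.addl]
    ring_nf
    simp only [two_mul_zmod, three_mul_zmod, add_zero, zero_add]

/-! The two cocycles -/

def czero : Cocycle := ⟨fun _ _ => 0, by simp, by simp, by simp⟩

noncomputable def cd (d : ℤ) : Cocycle where
  B f g := f.sum fun i v => v * g (i + d)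
  addl f g h := Finsupp.sum_add_index (by simp) (by intros; ring)
  addr f g h := by
    rw [← Finsupp.sum_add]
    refine Finsupp.sum_congr fun i _ => ?_
    rw [Finsupp.add_apply]; ring
  shift n f g := by
    show (Finsupp.equivMapDomain (Equiv.addRight n) f).sum _ = _
    rw [Finsupp.sum_equivMapDomain]
    refine Finsupp.sum_congr fun i _ => ?_
    show f i * sh n g ((Equiv.addRight n) i + d) = f i * g (i + d)
    rw [sh_apply]
    congr 2
    show i + n + d - n = i + d; ring

lemma cd_single (d i j : ℤ) :
    (cd d).B (Finsupp.single i 1) (Finsupp.single j 1)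
      = if j = i + d then 1 else 0 := by
  show (Finsupp.single i (1 : ZMod 2)).sum (fun i v => v * Finsupp.single j 1 (i + d)) = _
  rw [Finsupp.sum_single_index (by simp)]
  rw [one_mul, Finsupp.single_apply]


/-! ## The evaluation homomorphisms into W -/

noncomputable def rho (c : Cocycle) : FreeGroup Gen →* W c :=
  FreeGroup.lift fun g => match g with | Gen.a => aW | Gen.x => xW

lemma rho_A (c : Cocycle) : rho c A = aW := FreeGroup.lift_apply_of
lemma rho_X (c : Cocycle) : rho c X = xW := FreeGroup.lift_apply_of

lemma rho_AA (c : Cocycle) :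
    rho c (A * A) = ⟨0, c.B (Finsupp.single 0 1) (Finsupp.single 0 1), 0⟩ := by
  rw [map_mul, rho_A]; exact W_sq _ _

lemma rho_rel (c : Cocycle) (k : ℤ) :
    rho c ⁅A, X ^ (-k) * A * X ^ k⁆ =
      ⟨0, c.B (Finsupp.single 0 1) (Finsupp.single (-k) 1)
          + c.B (Finsupp.single (-k) 1) (Finsupp.single 0 1), 0⟩ := by
  rw [map_commutatorElement, map_mul, map_mul, map_zpow, map_zpow, rho_A, rho_X,
    W_conj_single]
  exact W_commutator _ _ _ _

/-! ## Truncated relator sets -/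

def lampT (N : ℕ) : Set (FreeGroup Gen) :=
  {w | w = A * A ∨ ∃ k : ℤ, |k| ≤ (N : ℤ) ∧ w = ⁅A, X ^ (-k) * A * X ^ k⁆}

lemma lampT_mono {N M : ℕ} (h : N ≤ M) : lampT N ⊆ lampT M := by
  rintro w (hw | ⟨k, hk, hw⟩)
  · exact Or.inl hw
  · exact Or.inr ⟨k, le_trans hk (by exact_mod_cast h), hw⟩

lemma cd_B_single0 (d k : ℤ) (hd : 0 < d) :
    (cd d).B (Finsupp.single 0 1) (Finsupp.single k 1)
      + (cd d).B (Finsupp.single k 1) (Finsupp.single 0 1)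
      = if k = d ∨ k = -d then 1 else 0 := by
  rw [cd_single, cd_single, zero_add]
  rcases eq_or_ne k d with rfl | h1
  · rw [if_pos rfl, if_neg, if_pos (Or.inl rfl), add_zero]
    omega
  · rcases eq_or_ne k (-d) with rfl | h2
    · rw [if_neg h1, if_pos (by omega), zero_add, if_pos (Or.inr rfl)]
    · rw [if_neg h1, if_neg (by omega), if_neg (by tauto), add_zero]

lemma rho_kills (N : ℕ) : ∀ r ∈ lampT N, rho (cd ((N : ℤ) + 1)) r = 1 := by
  rintro r (rfl | ⟨k, hk, rfl⟩)
  · rw [rho_AA, cd_single, if_neg (by omega)]; rfl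
  · rw [rho_rel]
    rw [abs_le] at hk
    have := cd_B_single0 ((N : ℤ) + 1) (-k) (by omega)
    rw [this, if_neg (by omega)]; rfl

lemma rho_lampT_le_ker (N : ℕ) :
    Subgroup.normalClosure (lampT N) ≤ (rho (cd ((N : ℤ) + 1))).ker :=
  Subgroup.normalClosure_le_normal fun r hr => MonoidHom.mem_ker.2 (rho_kills N r hr)

lemma rho_not_kill (N : ℕ) :
    rho (cd ((N : ℤ) + 1)) ⁅A, X ^ (-((N : ℤ) + 1)) * A * X ^ ((N : ℤ) + 1)⁆ ≠ 1 := by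
  rw [rho_rel]
  have := cd_B_single0 ((N : ℤ) + 1) (-((N : ℤ) + 1)) (by omega)
  rw [this, if_pos (Or.inr (by ring))]
  intro h
  have := congrArg W.e h
  simp only [W_one] at this
  exact one_ne_zero this

/-! ## The union of truncated normal closures -/

noncomputable def Ktrunc : Subgroup (FreeGroup Gen) where
  carrier := ⋃ N : ℕ, (Subgroup.normalClosure (lampT N) : Set (FreeGroup Gen))
  one_mem' := Set.mem_iUnion.2 ⟨0, one_mem _⟩
  mul_mem' := by
    rintro a b ha hb
    obtain ⟨Na, hNa⟩ := Set.mem_iUnion.1 ha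
    obtain ⟨Nb, hNb⟩ := Set.mem_iUnion.1 hb
    refine Set.mem_iUnion.2 ⟨max Na Nb, mul_mem ?_ ?_⟩
    · exact Subgroup.normalClosure_mono (lampT_mono (le_max_left _ _)) hNa
    · exact Subgroup.normalClosure_mono (lampT_mono (le_max_right _ _)) hNb
  inv_mem' := by
    rintro a ha
    obtain ⟨Na, hNa⟩ := Set.mem_iUnion.1 ha
    exact Set.mem_iUnion.2 ⟨Na, inv_mem hNa⟩

instance : Ktrunc.Normal := by
  constructor
  intro a ha g
  obtain ⟨Na, hNa⟩ := Set.mem_iUnion.1 ha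
  exact Set.mem_iUnion.2 ⟨Na, (Subgroup.normalClosure_normal).conj_mem a hNa g⟩

lemma mem_truncation {g : FreeGroup Gen} (hg : g ∈ Subgroup.normalClosure lampRels) :
    ∃ N : ℕ, g ∈ Subgroup.normalClosure (lampT N) := by
  have hle : Subgroup.normalClosure lampRels ≤ Ktrunc := by
    refine Subgroup.normalClosure_le_normal ?_
    rintro w (hw | ⟨k, hw⟩)
    · exact Set.mem_iUnion.2 ⟨0, Subgroup.subset_normalClosure (Or.inl hw)⟩
    · exact Set.mem_iUnion.2 ⟨k.natAbs,
        Subgroup.subset_normalClosure (Or.inr ⟨k, le_of_eq (Int.abs_eq_natAbs k), hw⟩)⟩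
  exact Set.mem_iUnion.1 (hle hg)

/-! ## Finite presentation compactness -/

lemma fp_compact {n : ℕ} (rels : Finset (FreeGroup (Fin n)))
    (e : PresentedGroup ((rels : Set (FreeGroup (Fin n)))) ≃* L) :
    ∃ T : Finset (FreeGroup Gen),
      Subgroup.normalClosure (T : Set (FreeGroup Gen))
        = Subgroup.normalClosure lampRels := by
  classical
  set mkn : FreeGroup (Fin n) →* PresentedGroup ((rels : Set (FreeGroup (Fin n)))) :=
    QuotientGroup.mk' _ with hmkn
  have toLsurj : Function.Surjective toL := QuotientGroup.mk'_surjective _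
  have emkn_surj : Function.Surjective (fun w => e (mkn w)) :=
    e.surjective.comp (QuotientGroup.mk'_surjective _)
  set α : FreeGroup (Fin n) →* FreeGroup Gen :=
    FreeGroup.lift fun i => Classical.choose (toLsurj (e (mkn (FreeGroup.of i)))) with hα
  set β : FreeGroup Gen →* FreeGroup (Fin n) :=
    FreeGroup.lift fun g => Classical.choose (emkn_surj (toL (FreeGroup.of g))) with hβ
  have h1 : ∀ w, toL (α w) = e (mkn w) := by
    intro w
    have : toL.comp α = (e.toMonoidHom).comp mkn := by
      refine FreeGroup.ext_hom _ _ fun i => ?_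
      simp only [MonoidHom.comp_apply, hα, FreeGroup.lift_apply_of]
      exact Classical.choose_spec (toLsurj (e (mkn (FreeGroup.of i))))
    exact DFunLike.congr_fun this w
  have h2 : ∀ w, e (mkn (β w)) = toL w := by
    intro w
    have : ((e.toMonoidHom).comp mkn).comp β = toL := by
      refine FreeGroup.ext_hom _ _ fun g => ?_
      simp only [MonoidHom.comp_apply, hβ, FreeGroup.lift_apply_of]
      exact Classical.choose_spec (emkn_surj (toL (FreeGroup.of g)))
    exact DFunLike.congr_fun this w
  refine ⟨rels.image α ∪ {A * (α (β A))⁻¹, X * (α (β X))⁻¹}, ?_⟩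
  have hker : Subgroup.normalClosure lampRels = toL.ker := (QuotientGroup.ker_mk' _).symm
  rw [hker]
  set T : Finset (FreeGroup Gen) := rels.image α ∪ {A * (α (β A))⁻¹, X * (α (β X))⁻¹}
    with hT
  set NC := Subgroup.normalClosure (T : Set (FreeGroup Gen)) with hNC
  have hTk : (T : Set (FreeGroup Gen)) ⊆ toL.ker := by
    intro w hw
    rw [SetLike.mem_coe, MonoidHom.mem_ker]
    simp only [hT, Finset.coe_union, Set.mem_union, Finset.coe_image, Set.mem_image,
      Finset.mem_coe, Finset.coe_insert, Set.mem_insert_iff, Finset.coe_singleton,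
      Set.mem_singleton_iff] at hw
    rcases hw with ⟨r, hr, rfl⟩ | rfl | rfl
    · rw [h1]
      have : mkn r = 1 := (QuotientGroup.eq_one_iff _).2 (Subgroup.subset_normalClosure hr)
      rw [this, map_one]
    · rw [map_mul, map_inv, h1, h2, mul_inv_cancel]
    · rw [map_mul, map_inv, h1, h2, mul_inv_cancel]
  refine le_antisymm (Subgroup.normalClosure_le_normal hTk) ?_
  intro w hw
  rw [MonoidHom.mem_ker] at hw
  -- q w = q (α (β w))
  set q : FreeGroup Gen →* FreeGroup Gen ⧸ NC := QuotientGroup.mk' NC with hq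
  have hqid : q.comp (α.comp β) = q := by
    refine FreeGroup.ext_hom _ _ fun g => ?_
    have hmem : FreeGroup.of g * (α (β (FreeGroup.of g)))⁻¹ ∈ NC := by
      apply Subgroup.subset_normalClosure
      cases g
      · exact Finset.mem_coe.2 (Finset.mem_union_right _ (by simp [A]))
      · exact Finset.mem_coe.2 (Finset.mem_union_right _ (by simp [X]))
    have h3 : q (FreeGroup.of g * (α (β (FreeGroup.of g)))⁻¹) = 1 :=
      (QuotientGroup.eq_one_iff _).2 hmem
    rw [map_mul, map_inv, mul_inv_eq_one] at h3
    simp only [MonoidHom.comp_apply]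
    exact h3.symm
  have hβw : β w ∈ Subgroup.normalClosure ((rels : Set (FreeGroup (Fin n)))) := by
    have : e (mkn (β w)) = 1 := by rw [h2, hw]
    have : mkn (β w) = 1 := by
      apply e.injective; rw [this, map_one]
    exact (QuotientGroup.eq_one_iff _).1 this
  have hαβw : α (β w) ∈ NC := by
    have hcl : Subgroup.normalClosure ((rels : Set (FreeGroup (Fin n))))
        ≤ Subgroup.comap α NC := by
      have : (Subgroup.comap α NC).Normal :=
        Subgroup.Normal.comap Subgroup.normalClosure_normal α
      refine Subgroup.normalClosure_le_normal ?_
      intro r hr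
      rw [SetLike.mem_coe, Subgroup.mem_comap]
      apply Subgroup.subset_normalClosure
      exact Finset.mem_coe.2 (Finset.mem_union_left _ (Finset.mem_image_of_mem α hr))
    exact Subgroup.mem_comap.1 (hcl hβw)
  have : q w = q (α (β w)) := (DFunLike.congr_fun hqid w).symm
  have : q w = 1 := by rw [this, hq]; exact (QuotientGroup.eq_one_iff _).2 hαβw
  exact (QuotientGroup.eq_one_iff _).1 this

/-! ## Part 1 -/

theorem part1 :
    ¬ ∃ (n : ℕ) (rels : Finset (FreeGroup (Fin n))),
        Nonempty (PresentedGroup ((rels : Set (FreeGroup (Fin n)))) ≃* L) := by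
  rintro ⟨n, rels, ⟨e⟩⟩
  obtain ⟨T, hT⟩ := fp_compact rels e
  choose Nf hNf using fun t (ht : t ∈ T) =>
    mem_truncation (hT ▸ Subgroup.subset_normalClosure (Finset.mem_coe.2 ht))
  classical
  set N : ℕ := T.sup fun t => if h : t ∈ T then Nf t h else 0 with hN
  have hTle : (T : Set (FreeGroup Gen)) ⊆ Subgroup.normalClosure (lampT N) := by
    intro t ht
    have ht' := Finset.mem_coe.1 ht
    refine Subgroup.normalClosure_mono (lampT_mono ?_) (hNf t ht')
    calc Nf t ht' = if h : t ∈ T then Nf t h else 0 := by rw [dif_pos ht']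
      _ ≤ N := Finset.le_sup (f := fun t => if h : t ∈ T then Nf t h else 0) ht'
  have hbig : Subgroup.normalClosure lampRels ≤ Subgroup.normalClosure (lampT N) := by
    rw [← hT]
    exact Subgroup.normalClosure_le_normal hTle
  have hmem : ⁅A, X ^ (-((N : ℤ) + 1)) * A * X ^ ((N : ℤ) + 1)⁆
      ∈ Subgroup.normalClosure lampRels :=
    Subgroup.subset_normalClosure (Or.inr ⟨(N : ℤ) + 1, rfl⟩)
  exact rho_not_kill N (MonoidHom.mem_ker.1 (rho_lampT_le_ker N (hbig hmem)))

/-! ## Basic lemmas in L -/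

noncomputable def xL : L := toL X
noncomputable def aL (k : ℤ) : L := toL (X ^ (-k) * A * X ^ k)

lemma toL_rel {r : FreeGroup Gen} (hr : r ∈ lampRels) : toL r = 1 :=
  (QuotientGroup.eq_one_iff _).2 (Subgroup.subset_normalClosure hr)

lemma toL_AA : toL A * toL A = 1 := by
  have := toL_rel (Or.inl rfl : A * A ∈ lampRels)
  rwa [map_mul] at this

lemma aL_def (k : ℤ) : aL k = xL ^ (-k) * toL A * xL ^ k := by
  rw [aL, map_mul, map_mul, map_zpow, map_zpow, xL]

lemma aL_zero : aL 0 = toL A := by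
  rw [aL_def]; group

lemma sq_aL (k : ℤ) : aL k * aL k = 1 := by
  have h : aL k * aL k = xL ^ (-k) * (toL A * toL A) * xL ^ k := by
    rw [aL_def]; group
  rw [h, toL_AA, mul_one]; group

lemma inv_aL (k : ℤ) : (aL k)⁻¹ = aL k :=
  inv_eq_of_mul_eq_one_right (sq_aL k)

lemma conj_aL (j k : ℤ) : xL ^ (-j) * aL k * xL ^ j = aL (k + j) := by
  rw [aL_def, aL_def]
  group

lemma commL_base (m : ℤ) : Commute (toL A) (aL m) := by
  have := toL_rel (Or.inr ⟨m, rfl⟩ : ⁅A, X ^ (-m) * A * X ^ m⁆ ∈ lampRels)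
  rw [map_commutatorElement] at this
  exact commutatorElement_eq_one_iff_commute.1 this

lemma commL (j k : ℤ) : Commute (aL j) (aL k) := by
  have hbase := commL_base (k - j)
  have h1 : aL j * aL k = xL ^ (-j) * (toL A * aL (k - j)) * xL ^ j := by
    have e1 : aL j = xL ^ (-j) * toL A * xL ^ j := aL_def j
    have e2 : aL k = xL ^ (-j) * aL (k - j) * xL ^ j := by
      rw [conj_aL, sub_add_cancel]
    rw [e1, e2]; group
  have h2 : aL k * aL j = xL ^ (-j) * (aL (k - j) * toL A) * xL ^ j := by
    have e1 : aL j = xL ^ (-j) * toL A * xL ^ j := aL_def j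
    have e2 : aL k = xL ^ (-j) * aL (k - j) * xL ^ j := by
      rw [conj_aL, sub_add_cancel]
    rw [e1, e2]; group
  show aL j * aL k = aL k * aL j
  rw [h1, h2, hbase.eq]

/-! ## Hom extensionality out of L -/

lemma Lhom_ext {H : Type*} [Group H] {g₁ g₂ : L →* H}
    (ha : g₁ (toL A) = g₂ (toL A)) (hx : g₁ (toL X) = g₂ (toL X)) : g₁ = g₂ := by
  have hsurj : Function.Surjective toL := QuotientGroup.mk'_surjective _
  refine (MonoidHom.cancel_right hsurj).1 ?_
  refine FreeGroup.ext_hom _ _ fun g => ?_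
  cases g
  · exact ha
  · exact hx

/-! ## π : L → W czero -/

noncomputable def rhoZ : FreeGroup Gen →* W czero :=
  FreeGroup.lift fun g => match g with | Gen.a => aW | Gen.x => xW⁻¹

lemma rhoZ_A : rhoZ A = aW := FreeGroup.lift_apply_of
lemma rhoZ_X : rhoZ X = xW⁻¹ := FreeGroup.lift_apply_of

lemma czero_B (f g : V) : czero.B f g = 0 := rfl

lemma rhoZ_conj (k : ℤ) :
    rhoZ (X ^ (-k) * A * X ^ k) = ⟨Finsupp.single k 1, 0, 0⟩ := by
  rw [map_mul, map_mul, map_zpow, map_zpow, rhoZ_A, rhoZ_X, inv_zpow, inv_zpow,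
    ← zpow_neg, ← zpow_neg, neg_neg]
  have := W_conj_single (c := czero) (-k)
  rwa [neg_neg] at this

lemma rhoZ_rels : ∀ r ∈ lampRels, rhoZ r = 1 := by
  rintro r (rfl | ⟨k, rfl⟩)
  · rw [map_mul, rhoZ_A, aW, W_sq, czero_B]; rfl
  · rw [map_commutatorElement, rhoZ_A, rhoZ_conj, aW, W_commutator, czero_B, czero_B]
    rfl

noncomputable def piL : L →* W czero := PresentedGroup.toGroup rhoZ_rels

lemma piL_toL (w : FreeGroup Gen) : piL (toL w) = rhoZ w := by
  have h : piL.comp toL = rhoZ := by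
    refine FreeGroup.ext_hom _ _ fun g => ?_
    show piL (toL (FreeGroup.of g)) = rhoZ (FreeGroup.of g)
    rw [rhoZ, FreeGroup.lift_apply_of]
    exact PresentedGroup.toGroup.of rhoZ_rels
  exact DFunLike.congr_fun h w

lemma piL_aL (k : ℤ) : piL (aL k) = ⟨Finsupp.single k 1, 0, 0⟩ := by
  rw [aL, piL_toL, rhoZ_conj]

lemma piL_xL : piL xL = xW⁻¹ := by rw [xL, piL_toL, rhoZ_X]

/-! ## The commutative subgroup generated by the aL and the product map -/

noncomputable def CL : Subgroup L := Subgroup.closure (Set.range aL)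

lemma CL_comm {u v : L} (hu : u ∈ CL) (hv : v ∈ CL) : u * v = v * u := by
  induction hu, hv using Subgroup.closure_induction₂ with
  | mem x y hx hy =>
    obtain ⟨j, rfl⟩ := hx
    obtain ⟨k, rfl⟩ := hy
    exact (commL j k).eq
  | one_left x hx => rw [one_mul, mul_one]
  | one_right x hx => rw [one_mul, mul_one]
  | mul_left x y z hx hy hz h1 h2 => rw [mul_assoc, h2, ← mul_assoc, h1, mul_assoc]
  | mul_right y z x hy hz hx h1 h2 => rw [← mul_assoc, h1, mul_assoc, h2, ← mul_assoc]
  | inv_left x y hx hy h => exact ((Commute.inv_left (h : Commute x y))).eq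
  | inv_right x y hx hy h => exact ((Commute.inv_right (h : Commute x y))).eq

noncomputable instance : CommGroup ↥CL :=
  { CL.toGroup with
    mul_comm := fun u v => Subtype.ext (CL_comm u.2 v.2) }

noncomputable def aCL (k : ℤ) : ↥CL := ⟨aL k, Subgroup.subset_closure ⟨k, rfl⟩⟩

lemma aCL_sq (k : ℤ) : (2 : ℤ) • Additive.ofMul (aCL k) = 0 := by
  show Additive.ofMul ((aCL k) ^ (2:ℤ)) = 0
  have : (aCL k) ^ (2:ℤ) = 1 := by
    refine Subtype.ext ?_
    show (aL k) ^ (2:ℤ) = 1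
    rw [show ((2:ℤ) = 1 + 1) from rfl, zpow_add, zpow_one, sq_aL]
  rw [this]; rfl

noncomputable def FCL : V →+ Additive ↥CL :=
  Finsupp.liftAddHom fun k =>
    ZMod.lift 2 ⟨zmultiplesHom _ (Additive.ofMul (aCL k)), aCL_sq k⟩

noncomputable def aprod (f : V) : L := ((FCL f).toMul : ↥CL)

lemma aprod_add (f g : V) : aprod (f + g) = aprod f * aprod g := by
  unfold aprod
  rw [map_add]
  rfl

lemma aprod_zero : aprod 0 = 1 := by
  unfold aprod
  rw [map_zero]
  rfl

lemma aprod_single (k : ℤ) : aprod (Finsupp.single k 1) = aL k := by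
  have h1 : (1 : ZMod 2) = ((1 : ℤ) : ZMod 2) := by norm_cast
  have h2 : FCL (Finsupp.single k 1) = Additive.ofMul (aCL k) := by
    unfold FCL
    rw [Finsupp.liftAddHom_apply_single, h1, ZMod.lift_coe]
    show (1:ℤ) • Additive.ofMul (aCL k) = _
    rw [one_smul]
  unfold aprod
  rw [h2]
  rfl

lemma conj_aprod (n : ℤ) (g : V) :
    aprod (sh n g) = xL ^ (-n) * aprod g * xL ^ n := by
  induction g using Finsupp.induction with
  | zero => rw [map_zero, aprod_zero, mul_one]; group
  | single_add k v f _ _ ih =>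
    have hv : v = 0 ∨ v = 1 := by revert v; decide
    rcases hv with rfl | rfl
    · rw [Finsupp.single_zero, zero_add]; exact ih
    · rw [map_add, aprod_add, sh_single, aprod_single, aprod_add, aprod_single, ih,
        ← conj_aL n k]
      group

/-! ## σ : W czero → L and injectivity of π -/

noncomputable def sigmaL : W czero →* L where
  toFun u := aprod u.f * xL ^ (-u.n)
  map_one' := by
    show aprod (W.f 1) * xL ^ (-(W.n 1)) = 1
    rw [W_one]
    show aprod 0 * xL ^ (-(0:ℤ)) = 1
    rw [aprod_zero, one_mul, neg_zero, zpow_zero]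
  map_mul' u v := by
    show aprod (u.f + sh u.n v.f) * xL ^ (-(u.n + v.n))
      = (aprod u.f * xL ^ (-u.n)) * (aprod v.f * xL ^ (-v.n))
    rw [aprod_add, conj_aprod]
    group

lemma sigma_piL : sigmaL.comp piL = MonoidHom.id L := by
  refine Lhom_ext ?_ ?_
  · show sigmaL (piL (toL A)) = toL A
    rw [← aL_zero, piL_aL]
    show aprod (Finsupp.single 0 1) * xL ^ (-(0:ℤ)) = aL 0
    rw [aprod_single, neg_zero, zpow_zero, mul_one]
  · show sigmaL (piL (toL X)) = toL X
    rw [← xL, piL_xL, map_inv]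
    have : sigmaL xW = xL ^ (-(1:ℤ)) := by
      show aprod (W.f xW) * xL ^ (-(W.n xW)) = xL ^ (-(1:ℤ))
      show aprod 0 * xL ^ (-(1:ℤ)) = xL ^ (-(1:ℤ))
      rw [aprod_zero, one_mul]
    rw [this]
    group

lemma piL_inj : Function.Injective piL := by
  intro u v huv
  have := DFunLike.congr_fun sigma_piL
  calc u = sigmaL (piL u) := (this u).symm
    _ = sigmaL (piL v) := by rw [huv]
    _ = v := this v

/-! ## The endomorphism φ : L → L, a ↦ x⁻¹axa -/

lemma toL_chi : toL (X⁻¹ * A * X * A) = aL 1 * aL 0 := by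
  rw [map_mul, map_mul, map_mul, map_inv, aL_def, aL_def]
  rw [← xL]
  group

lemma phi_rels : ∀ r ∈ lampRels,
    (FreeGroup.lift fun g => match g with
      | Gen.a => toL (X⁻¹ * A * X * A) | Gen.x => toL X) r = 1 := by
  set Φ : FreeGroup Gen →* L := FreeGroup.lift fun g => match g with
      | Gen.a => toL (X⁻¹ * A * X * A) | Gen.x => toL X with hΦ
  have hA : Φ A = aL 1 * aL 0 := by
    rw [hΦ, A, FreeGroup.lift_apply_of]
    exact toL_chi
  have hX : Φ X = xL := FreeGroup.lift_apply_of
  have hconj : ∀ k : ℤ, Φ (X ^ (-k) * A * X ^ k) = aL (1 + k) * aL k := by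
    intro k
    rw [map_mul, map_mul, map_zpow, map_zpow, hA, hX]
    have h1 : xL ^ (-k) * (aL 1 * aL 0) * xL ^ k
        = (xL ^ (-k) * aL 1 * xL ^ k) * (xL ^ (-k) * aL 0 * xL ^ k) := by group
    rw [h1, conj_aL, conj_aL, zero_add]
  have hsq : ∀ j k : ℤ, (aL j * aL k) * (aL j * aL k) = 1 := by
    intro j k
    calc (aL j * aL k) * (aL j * aL k) = aL j * (aL k * aL j) * aL k := by group
      _ = aL j * (aL j * aL k) * aL k := by rw [(commL k j).eq]
      _ = (aL j * aL j) * (aL k * aL k) := by group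
      _ = 1 := by rw [sq_aL, sq_aL, mul_one]
  rintro r (rfl | ⟨k, rfl⟩)
  · rw [map_mul, hA]; exact hsq 1 0
  · rw [map_commutatorElement, hA, hconj]
    refine commutatorElement_eq_one_iff_commute.2 ?_
    exact (((commL 1 (1+k)).mul_right (commL 1 k)).mul_left
      ((commL 0 (1+k)).mul_right (commL 0 k)))

noncomputable def phiL : L →* L := PresentedGroup.toGroup phi_rels

lemma phiL_toL (w : FreeGroup Gen) :
    phiL (toL w) = (FreeGroup.lift fun g => match g with
      | Gen.a => toL (X⁻¹ * A * X * A) | Gen.x => toL X) w := by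
  have h : phiL.comp toL = FreeGroup.lift fun g => match g with
      | Gen.a => toL (X⁻¹ * A * X * A) | Gen.x => toL X := by
    refine FreeGroup.ext_hom _ _ fun g => ?_
    show phiL (toL (FreeGroup.of g)) = _
    rw [FreeGroup.lift_apply_of]
    exact PresentedGroup.toGroup.of phi_rels
  exact DFunLike.congr_fun h w

lemma phiL_A : phiL (toL A) = aL 1 * aL 0 := by
  rw [phiL_toL]
  show (FreeGroup.lift _) (FreeGroup.of Gen.a) = _
  rw [FreeGroup.lift_apply_of]
  exact toL_chi

lemma phiL_X : phiL xL = xL := by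
  rw [xL, phiL_toL]
  show (FreeGroup.lift _) (FreeGroup.of Gen.x) = _
  rw [FreeGroup.lift_apply_of]

/-! ## Injectivity of φ via the concrete model -/

lemma M_inj : Function.Injective (fun f : V => f + sh 1 f) := by
  have hker : ∀ f : V, f + sh 1 f = 0 → f = 0 := by
    intro f hf
    by_contra hne
    have hsupp : f.support.Nonempty := Finsupp.support_nonempty_iff.2 hne
    set m := f.support.max' hsupp with hm
    have hmem : m ∈ f.support := f.support.max'_mem hsupp
    have hfm : f m ≠ 0 := Finsupp.mem_support_iff.1 hmem
    have h1 : f (m + 1) = 0 := by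
      by_contra h
      have : m + 1 ∈ f.support := Finsupp.mem_support_iff.2 h
      have := f.support.le_max' _ this
      omega
    have := DFunLike.congr_fun hf (m + 1)
    rw [Finsupp.add_apply, sh_apply, Finsupp.zero_apply, add_sub_cancel_right, h1,
      zero_add] at this
    exact hfm this
  intro f g hfg
  have h0 : (f - g) + sh 1 (f - g) = 0 := by
    simp only at hfg
    rw [map_sub]
    have : f + sh 1 f - (g + sh 1 g) = 0 := by rw [hfg]; abel
    calc f - g + (sh 1 f - sh 1 g) = f + sh 1 f - (g + sh 1 g) := by abel
      _ = 0 := this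
  have := hker _ h0
  exact sub_eq_zero.1 this

noncomputable def eW : W czero →* W czero where
  toFun u := ⟨u.f + sh 1 u.f, u.e, u.n⟩
  map_one' := by
    rw [W_one]
    show (⟨0 + sh 1 0, 0, 0⟩ : W czero) = ⟨0,0,0⟩
    rw [map_zero, add_zero]
  map_mul' u v := by
    rw [W_mul]
    show (⟨(u.f + sh u.n v.f) + sh 1 (u.f + sh u.n v.f), u.e + v.e + czero.B _ _,
        u.n + v.n⟩ : W czero)
      = (⟨u.f + sh 1 u.f, u.e, u.n⟩ : W czero) * ⟨v.f + sh 1 v.f, v.e, v.n⟩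
    rw [W_mul]
    refine W.ext ?_ ?_ rfl
    · show u.f + sh u.n v.f + sh 1 (u.f + sh u.n v.f)
        = u.f + sh 1 u.f + sh u.n (v.f + sh 1 v.f)
      rw [map_add, map_add, sh_sh, sh_sh, add_comm (1:ℤ) u.n]
      abel
    · show u.e + v.e + czero.B _ _ = u.e + v.e + czero.B _ _
      rw [czero_B, czero_B]

lemma eW_inj : Function.Injective eW := by
  intro u v huv
  have hf := congrArg W.f huv
  have he := congrArg W.e huv
  have hn := congrArg W.n huv
  refine W.ext ?_ he hn
  exact M_inj hf

lemma piL_phiL : piL.comp phiL = eW.comp piL := by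
  refine Lhom_ext ?_ ?_
  · show piL (phiL (toL A)) = eW (piL (toL A))
    rw [phiL_A, map_mul, piL_aL, piL_aL, ← aL_zero, piL_aL]
    show ((⟨Finsupp.single 1 1, 0, 0⟩ : W czero) * ⟨Finsupp.single 0 1, 0, 0⟩)
      = eW ⟨Finsupp.single 0 1, 0, 0⟩
    rw [W_e_mul, czero_B]
    show (⟨Finsupp.single 1 1 + Finsupp.single 0 1, 0 + 0 + 0, 0⟩ : W czero)
      = ⟨Finsupp.single 0 1 + sh 1 (Finsupp.single 0 1), 0, 0⟩
    rw [sh_single, zero_add]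
    refine W.ext (add_comm _ _) (by ring) rfl
  · show piL (phiL (toL X)) = eW (piL (toL X))
    rw [← xL, phiL_X, piL_xL]
    have hxWinv : (xW : W czero)⁻¹ = ⟨0, 0, -1⟩ := by
      rw [W_inv]
      show (⟨sh (-(1:ℤ)) 0, 0 + czero.B 0 0, -(1:ℤ)⟩ : W czero) = ⟨0,0,-1⟩
      rw [map_zero, czero_B, add_zero]
    rw [hxWinv]
    show (⟨0,0,-1⟩ : W czero) = (⟨(0:V) + sh 1 0, 0, -1⟩ : W czero)
    rw [map_zero, add_zero]

lemma phiL_inj : Function.Injective phiL := by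
  intro u v huv
  apply piL_inj
  apply eW_inj
  have h1 := DFunLike.congr_fun piL_phiL u
  have h2 := DFunLike.congr_fun piL_phiL v
  simp only [MonoidHom.comp_apply] at h1 h2
  rw [← h1, ← h2, huv]

/-! ## The group E -/


noncomputable def aE : E := toE Ae
noncomputable def xE : E := toE Xe
noncomputable def tE : E := toE Te

lemma toE_rel {r : FreeGroup Gen3} (hr : r ∈ extRels) : toE r = 1 :=
  (QuotientGroup.eq_one_iff _).2 (Subgroup.subset_normalClosure hr)

lemma hE_sq : aE * aE = 1 := by
  have := toE_rel (show Ae * Ae ∈ extRels from Or.inl rfl)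
  rwa [map_mul] at this

lemma hE_xt : Commute xE tE := by
  have := toE_rel (show ⁅Xe, Te⁆ ∈ extRels from Or.inr (Or.inl rfl))
  rw [map_commutatorElement] at this
  exact commutatorElement_eq_one_iff_commute.1 this

lemma hE_conj : tE⁻¹ * aE * tE = xE⁻¹ * aE * xE * aE := by
  have := toE_rel
    (show (Te⁻¹ * Ae * Te) * (Xe⁻¹ * Ae * Xe * Ae)⁻¹ ∈ extRels from Or.inr (Or.inr rfl))
  rw [map_mul, map_inv, map_mul, map_mul, map_inv, map_mul, map_mul, map_mul, map_inv,
    mul_inv_eq_one] at this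
  exact this

noncomputable def aEk (k : ℤ) : E := xE ^ (-k) * aE * xE ^ k

lemma aEk_zero : aEk 0 = aE := by rw [aEk]; group

lemma aEk_sq (k : ℤ) : aEk k * aEk k = 1 := by
  have h : aEk k * aEk k = xE ^ (-k) * (aE * aE) * xE ^ k := by rw [aEk]; group
  rw [h, hE_sq, mul_one]; group

lemma aEk_inv (k : ℤ) : (aEk k)⁻¹ = aEk k := inv_eq_of_mul_eq_one_right (aEk_sq k)

lemma tE_conj (k : ℤ) : tE⁻¹ * aEk k * tE = aEk (k + 1) * aEk k := by
  have hc1 : tE⁻¹ * xE ^ (-k) = xE ^ (-k) * tE⁻¹ :=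
    ((hE_xt.zpow_left (-k)).inv_right).symm.eq
  have hc2 : xE ^ k * tE = tE * xE ^ k := (hE_xt.zpow_left k).eq
  calc tE⁻¹ * aEk k * tE = (tE⁻¹ * xE ^ (-k)) * aE * (xE ^ k * tE) := by rw [aEk]; group
    _ = xE ^ (-k) * (tE⁻¹ * aE * tE) * xE ^ k := by rw [hc1, hc2]; group
    _ = xE ^ (-k) * (xE⁻¹ * aE * xE * aE) * xE ^ k := by rw [hE_conj]
    _ = (xE ^ (-(k+1)) * aE * xE ^ (k+1)) * (xE ^ (-k) * aE * xE ^ k) := by group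
    _ = aEk (k + 1) * aEk k := by rw [aEk, aEk]

lemma commE_step {j : ℤ} {n : ℕ}
    (h_n : ∀ i : ℤ, Commute (aEk i) (aEk (i + n)))
    (h_n1 : ∀ i : ℤ, Commute (aEk i) (aEk (i + n + 1))) :
    Commute (aEk j) (aEk (j + n + 2)) := by
  set u := aEk (j + 1)
  set v := aEk j
  set w := aEk (j + n + 2)
  set z := aEk (j + n + 1)
  have hu_w : Commute u w := by
    have := h_n1 (j + 1)
    have e : j + 1 + n + 1 = j + n + 2 := by ring
    rwa [e] at this
  have hu_z : Commute u z := by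
    have := h_n (j + 1)
    have e : j + 1 + n = j + n + 1 := by ring
    rwa [e] at this
  have hv_z : Commute v z := by
    have := h_n1 j
    exact this
  -- conjugate hv_z by t
  have h2 : Commute (u * v) (w * z) := by
    have hmap := hv_z.map (MulAut.conj (tE⁻¹)).toMonoidHom
    have e1 : (MulAut.conj (tE⁻¹)).toMonoidHom v = u * v := by
      show tE⁻¹ * v * tE⁻¹⁻¹ = u * v
      rw [inv_inv]
      exact tE_conj j
    have e2 : (MulAut.conj (tE⁻¹)).toMonoidHom z = w * z := by
      show tE⁻¹ * z * tE⁻¹⁻¹ = w * z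
      rw [inv_inv]
      have := tE_conj (j + n + 1)
      have e : j + n + 1 + 1 = j + n + 2 := by ring
      rwa [e] at this
    rwa [e1, e2] at hmap
  have key : u * (v * w) * z = u * (w * v) * z := by
    calc u * (v * w) * z = (u * v) * (w * z) := by group
      _ = (w * z) * (u * v) := h2.eq
      _ = w * (z * u) * v := by group
      _ = w * (u * z) * v := by rw [← hu_z.eq]
      _ = (w * u) * (z * v) := by group
      _ = (u * w) * (v * z) := by rw [← hu_w.eq, ← hv_z.eq]
      _ = u * (w * v) * z := by group
  have h3 : v * w = w * v := by
    have h4 := mul_right_cancel key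
    exact mul_left_cancel h4
  exact h3

lemma commE_n : ∀ n : ℕ, ∀ j : ℤ, Commute (aEk j) (aEk (j + n)) := by
  have base1 : ∀ j : ℤ, Commute (aEk j) (aEk (j + 1)) := by
    intro j
    have h1 : tE⁻¹ * (aEk j * aEk j) * tE
        = (aEk (j+1) * aEk j) * (aEk (j+1) * aEk j) := by
      calc tE⁻¹ * (aEk j * aEk j) * tE
          = (tE⁻¹ * aEk j * tE) * (tE⁻¹ * aEk j * tE) := by group
        _ = (aEk (j+1) * aEk j) * (aEk (j+1) * aEk j) := by rw [tE_conj]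
    rw [aEk_sq, mul_one, inv_mul_cancel] at h1
    have h2 : aEk (j+1) * aEk j = (aEk (j+1) * aEk j)⁻¹ :=
      eq_inv_of_mul_eq_one_right h1.symm
    rw [mul_inv_rev, aEk_inv, aEk_inv] at h2
    exact (show Commute (aEk (j+1)) (aEk j) from h2).symm
  have main : ∀ n : ℕ, (∀ j : ℤ, Commute (aEk j) (aEk (j + n)))
      ∧ (∀ j : ℤ, Commute (aEk j) (aEk (j + n + 1))) := by
    intro n
    induction n with
    | zero =>
      constructor
      · intro j; rw [Nat.cast_zero, add_zero]
      · intro j; rw [Nat.cast_zero, add_zero]; exact base1 j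
    | succ m ih =>
      constructor
      · intro j
        have := ih.2 j
        have e : j + (m : ℤ) + 1 = j + ((m : ℕ) + 1 : ℕ) := by push_cast; ring
        rwa [e] at this
      · intro j
        have := commE_step (j := j) (n := m) ih.1 ih.2
        have e : j + (m : ℤ) + 2 = j + ((m : ℕ) + 1 : ℕ) + 1 := by push_cast; ring
        rwa [e] at this
  exact fun n => (main n).1

lemma commE (j k : ℤ) : Commute (aEk j) (aEk k) := by
  rcases le_total j k with h | h
  · have := commE_n (k - j).toNat j
    have e : j + ((k - j).toNat : ℤ) = k := by omega
    rwa [e] at this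
  · have := commE_n (j - k).toNat k
    have e : k + ((j - k).toNat : ℤ) = j := by omega
    rw [e] at this
    exact this.symm

/-! ## The homomorphism L → E -/

lemma fLE_rels : ∀ r ∈ lampRels,
    (FreeGroup.lift fun g => match g with | Gen.a => aE | Gen.x => xE) r = 1 := by
  set Φ : FreeGroup Gen →* E := FreeGroup.lift fun g => match g with
    | Gen.a => aE | Gen.x => xE with hΦ
  have hA : Φ A = aE := FreeGroup.lift_apply_of
  have hX : Φ X = xE := FreeGroup.lift_apply_of
  have hconj : ∀ k : ℤ, Φ (X ^ (-k) * A * X ^ k) = aEk k := by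
    intro k
    rw [map_mul, map_mul, map_zpow, map_zpow, hA, hX, aEk]
  rintro r (rfl | ⟨k, rfl⟩)
  · rw [map_mul, hA]; exact hE_sq
  · rw [map_commutatorElement, hA, hconj]
    refine commutatorElement_eq_one_iff_commute.2 ?_
    have := commE 0 k
    rwa [aEk_zero] at this

noncomputable def fLE : L →* E := PresentedGroup.toGroup fLE_rels

lemma fLE_toL (w : FreeGroup Gen) :
    fLE (toL w) = (FreeGroup.lift fun g => match g with
      | Gen.a => aE | Gen.x => xE) w := by
  have h : fLE.comp toL = FreeGroup.lift fun g => match g with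
      | Gen.a => aE | Gen.x => xE := by
    refine FreeGroup.ext_hom _ _ fun g => ?_
    show fLE (toL (FreeGroup.of g)) = _
    rw [FreeGroup.lift_apply_of]
    exact PresentedGroup.toGroup.of fLE_rels
  exact DFunLike.congr_fun h w

lemma fLE_A : fLE (toL A) = aE := by
  rw [fLE_toL]; exact FreeGroup.lift_apply_of

lemma fLE_X : fLE (toL X) = xE := by
  rw [fLE_toL]; exact FreeGroup.lift_apply_of

/-! ## The HNN extension -/

noncomputable def phiIso : (⊤ : Subgroup L) ≃* phiL.range :=
  (Subgroup.topEquiv).trans (MonoidHom.ofInjective phiL_inj)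

noncomputable abbrev HNNE := HNNExtension L ⊤ phiL.range phiIso

lemma t_conj_of (l : L) :
    (HNNExtension.t : HNNE) * HNNExtension.of l * (HNNExtension.t : HNNE)⁻¹
      = HNNExtension.of (phiL l) := by
  have h := HNNExtension.t_mul_of (φ := phiIso) (⟨l, trivial⟩ : (⊤ : Subgroup L))
  have hcoe : ((phiIso ⟨l, trivial⟩ : phiL.range) : L) = phiL l := by
    show ((MonoidHom.ofInjective phiL_inj (Subgroup.topEquiv ⟨l, trivial⟩)
        : phiL.range) : L) = phiL l
    rw [MonoidHom.ofInjective_apply]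
    rfl
  rw [hcoe] at h
  rw [show ((⟨l, trivial⟩ : (⊤ : Subgroup L)) : L) = l from rfl] at h
  rw [h, mul_assoc, mul_inv_cancel, mul_one]

noncomputable def f3 : Gen3 → HNNE := fun g => match g with
  | Gen3.a => HNNExtension.of (toL A)
  | Gen3.x => HNNExtension.of xL
  | Gen3.t => (HNNExtension.t : HNNE)⁻¹

lemma comm_of_xL_t : Commute (HNNExtension.of xL : HNNE) (HNNExtension.t : HNNE) := by
  have h := t_conj_of xL
  rw [phiL_X] at h
  have : (HNNExtension.t : HNNE) * HNNExtension.of xL = HNNExtension.of xL * HNNExtension.t := by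
    calc (HNNExtension.t : HNNE) * HNNExtension.of xL
        = ((HNNExtension.t : HNNE) * HNNExtension.of xL * HNNExtension.t⁻¹) * HNNExtension.t := by
          group
      _ = HNNExtension.of xL * HNNExtension.t := by rw [h]
  exact (show Commute (HNNExtension.t : HNNE) (HNNExtension.of xL) from this).symm

lemma hEH_rels : ∀ r ∈ extRels, (FreeGroup.lift f3) r = 1 := by
  set Ψ : FreeGroup Gen3 →* HNNE := FreeGroup.lift f3 with hΨ
  have hA : Ψ Ae = HNNExtension.of (toL A) := FreeGroup.lift_apply_of
  have hX : Ψ Xe = HNNExtension.of xL := FreeGroup.lift_apply_of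
  have hT : Ψ Te = (HNNExtension.t : HNNE)⁻¹ := FreeGroup.lift_apply_of
  rintro r (rfl | rfl | rfl)
  · rw [map_mul, hA, ← map_mul, toL_AA, map_one]
  · rw [map_commutatorElement, hX, hT]
    exact commutatorElement_eq_one_iff_commute.2 comm_of_xL_t.inv_right
  · rw [map_mul, map_inv, map_mul, map_mul, map_inv, map_mul, map_mul, map_mul,
      map_inv, hA, hX, hT, inv_inv]
    have h1 : (HNNExtension.t : HNNE) * HNNExtension.of (toL A) * HNNExtension.t⁻¹
        = HNNExtension.of (aL 1 * aL 0) := by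
      rw [← phiL_A]; exact t_conj_of (toL A)
    have hL : aL 1 * aL 0 = xL⁻¹ * toL A * xL * toL A := by
      rw [aL_def, aL_def]; group
    have h2 : (HNNExtension.of xL : HNNE)⁻¹ * HNNExtension.of (toL A) * HNNExtension.of xL
          * HNNExtension.of (toL A)
        = HNNExtension.of (aL 1 * aL 0) := by
      rw [hL, map_mul, map_mul, map_mul, map_inv]
    rw [h1, h2, mul_inv_cancel]

noncomputable def hEH : E →* HNNE := PresentedGroup.toGroup hEH_rels

lemma hEH_toE (w : FreeGroup Gen3) : hEH (toE w) = FreeGroup.lift f3 w := by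
  have h : hEH.comp toE = FreeGroup.lift f3 := by
    refine FreeGroup.ext_hom _ _ fun g => ?_
    show hEH (toE (FreeGroup.of g)) = _
    rw [FreeGroup.lift_apply_of]
    exact PresentedGroup.toGroup.of hEH_rels
  exact DFunLike.congr_fun h w

lemma hEH_fLE : hEH.comp fLE = (HNNExtension.of : L →* HNNE) := by
  refine Lhom_ext ?_ ?_
  · show hEH (fLE (toL A)) = HNNExtension.of (toL A)
    rw [fLE_A, aE, hEH_toE]
    exact FreeGroup.lift_apply_of
  · show hEH (fLE (toL X)) = HNNExtension.of (toL X)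
    rw [fLE_X, xE, hEH_toE]
    exact FreeGroup.lift_apply_of

lemma fLE_inj : Function.Injective fLE := by
  intro u v huv
  have h1 := DFunLike.congr_fun hEH_fLE u
  have h2 := DFunLike.congr_fun hEH_fLE v
  simp only [MonoidHom.comp_apply] at h1 h2
  apply HNNExtension.of_injective (φ := phiIso)
  rw [← h1, ← h2, huv]

/-- L is not finitely presentable, but embeds in the finitely presented group E via
x ↦ x, a ↦ a. -/
theorem lamplighter_not_fp_but_embeds :
    (¬ ∃ (n : ℕ) (rels : Finset (FreeGroup (Fin n))),
        Nonempty (PresentedGroup (rels : Set (FreeGroup (Fin n))) ≃* L)) ∧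
    (∃ f : L →* E, Function.Injective f ∧ f (toL X) = toE Xe ∧ f (toL A) = toE Ae) := by
  exact ⟨part1, fLE, fLE_inj, fLE_X, fLE_A⟩
end
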